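/- arXiv:1005.5595 — 8 statements merged into one kernel-verified Lean document; each statement's English description precedes it below -/
import Mathlib

section
/- The derivation d₀ of B is an outer derivation: there is no element u ∈ B such that d₀ = ad_u (where ad_u(x) = [u,x]). -/
/-!
Only the `L (0, 0)`-component `c` of `u` contributes to the `L (1, j)`-coefficient of
`⁅u, L (1, j)⁆`, and it contributes `-(j + 1) c`. Since `d₀ (L (1, j)) = L (1, j)`, an inner
`d₀ = ad u` would force `1 = -(j + 1) c` for every `j`; `j = 0` and `j = 1` are incompatible.
-/

theorem Module.Basis.coord_one_lie_basis_one {F B : Type*} [Field F] [LieRing B]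
    [LieAlgebra F B] (L : Module.Basis (ℤ × ℕ) F B)
    (hL : ∀ (α β : ℤ) (i j : ℕ),
      ⁅L (α, i), L (β, j)⁆ =
        (((α - 1) * (j + 1) - (β - 1) * (i + 1) : ℤ) : F) • L (α + β, i + j))
    (j : ℕ) (u : B) :
    L.coord (1, j) ⁅u, L (1, j)⁆ = -((j : F) + 1) * L.coord (0, 0) u := by
  have hlin : (L.coord (1, j)).comp
      ((LieModule.toEnd F B B : B →ₗ[F] Module.End F B).flip (L (1, j))) =
      -((j : F) + 1) • L.coord (0, 0) := by
    refine L.ext fun ⟨α, i⟩ => ?_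
    simp only [LinearMap.comp_apply, LinearMap.flip_apply, LieHom.coe_toLinearMap,
      LieModule.toEnd_apply_apply, hL, LinearMap.smul_apply, Module.Basis.coord_apply,
      map_smul, Module.Basis.repr_self, Finsupp.single_apply, Prod.mk.injEq, smul_eq_mul]
    by_cases hα : α = 0 <;> by_cases hi : i = 0 <;> simp [hα, hi]
  simpa using LinearMap.congr_fun hlin u

theorem d0_is_outer_general
    {F : Type*} [Field F]
    {B : Type*} [LieRing B] [LieAlgebra F B]
    (L : Module.Basis (ℤ × ℕ) F B)
    (hL : ∀ (α β : ℤ) (i j : ℕ),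
      ⁅L (α, i), L (β, j)⁆ =
        (((α - 1) * (j + 1) - (β - 1) * (i + 1) : ℤ) : F) • L (α + β, i + j))
    (d₀ : B →ₗ[F] B)
    (hd₀ : ∀ (β : ℤ) (j : ℕ), d₀ (L (β, j)) = (β : F) • L (β, j)) :
    ¬ ∃ u : B, ∀ x : B, d₀ x = ⁅u, x⁆ := by
  rintro ⟨u, hu⟩
  have hcoord (j : ℕ) : (1 : F) = -((j : F) + 1) * L.coord (0, 0) u := by
    rw [← L.coord_one_lie_basis_one hL, ← hu, hd₀]
    simp
  have h₀ := hcoord 0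
  have h₁ := hcoord 1
  push_cast at h₀ h₁
  exact one_ne_zero (by linear_combination 2 * h₀ - h₁ : (1 : F) = 0)

/-- The derivation `d₀` of the Block type Lie algebra `B`
(determined on the basis by `d₀ (L (β,j)) = β • L (β,j)`) is an outer derivation:
there is no `u ∈ B` with `d₀ = ad u`, i.e. with `d₀ x = ⁅u, x⁆` for all `x`. -/
theorem d0_is_outer
    {F : Type*} [Field F] [IsAlgClosed F] [CharZero F]
    {B : Type*} [LieRing B] [LieAlgebra F B]
    (L : Module.Basis (ℤ × ℕ) F B)
    (hL : ∀ (α β : ℤ) (i j : ℕ),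
      ⁅L (α, i), L (β, j)⁆ =
        (((α - 1) * (j + 1) - (β - 1) * (i + 1) : ℤ) : F) • L (α + β, i + j))
    (d₀ : B →ₗ[F] B)
    (hd₀ : ∀ (β : ℤ) (j : ℕ), d₀ (L (β, j)) = (β : F) • L (β, j)) :
    ¬ ∃ u : B, ∀ x : B, d₀ x = ⁅u, x⁆ :=
  d0_is_outer_general L hL d₀ hd₀
end

section
/- (Theorem 2.1, existence part) Every derivation d of the Lie algebra B can be written as d = ad_u + λ·d₀ for some u ∈ B and λ ∈ F; that is, Der(B) = ad(B) + F·d₀. -/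
/-!
Write `h = L (0, 0)`, `t = L (1, 0)` and `s = L (0, 1)`. Since `ad h` acts on `L (β, j)` by
`-(β + j)`, the coordinates in the basis `L` carry a grading by `β + j`. Comparing coordinates in
`d ⁅h, t⁆` shows that `d h` has no component of degree `0`, so `d h = ⁅u, h⁆` for some `u`; after
subtracting `ad u`, the derivation kills `h` and therefore preserves degrees. A further inner
derivation of degree `0` and a multiple of `d₀` make it kill `t` and the `(0, 1)`-coordinate of
`d s`. Such a derivation `D` vanishes: `ad t` is injective in degrees `≤ 0` and `ad (L (-1, 0))` in
degrees `≥ 0`, which gives `D (L (β, 0)) = 0` for all `β`; a single coordinate identity then gives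
`D s = 0`, and the `L (β, 0)` together with `s` generate the algebra.
-/

namespace BlockLieAlgebra

def blockCoeff (α : ℤ) (i : ℕ) (β : ℤ) (j : ℕ) : ℤ := (α - 1) * (j + 1) - (β - 1) * (i + 1)

def IsBlockBasis {R B : Type*} [CommRing R] [LieRing B] [LieAlgebra R B]
    (L : Module.Basis (ℤ × ℕ) R B) : Prop :=
  ∀ (α β : ℤ) (i j : ℕ), ⁅L (α, i), L (β, j)⁆ = (blockCoeff α i β j : R) • L (α + β, i + j)

def IsHomogeneous {R M : Type*} [Semiring R] [AddCommMonoid M] [Module R M]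
    (L : Module.Basis (ℤ × ℕ) R M) (n : ℤ) (x : M) : Prop :=
  ∀ q : ℤ × ℕ, q.1 + q.2 ≠ n → L.repr x q = 0

theorem _root_.Module.Basis.exists_repr_eq {ι R M : Type*} [Semiring R] [AddCommMonoid M]
    [Module R M] (b : Module.Basis ι R M) (f : ι → R) (hf : (Function.support f).Finite) :
    ∃ u, ∀ i, b.repr u i = f i :=
  ⟨b.repr.symm (Finsupp.ofSupportFinite f hf), by simp [Finsupp.ofSupportFinite_coe]⟩

section CommRing

variable {R B : Type*} [CommRing R] [LieRing B] [LieAlgebra R B] {L : Module.Basis (ℤ × ℕ) R B}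

namespace IsBlockBasis

theorem repr_lie_basis_apply (hL : IsBlockBasis L) (α β : ℤ) (i k : ℕ) (y : B) :
    L.repr ⁅L (α, i), y⁆ (α + β, i + k) = blockCoeff α i β k * L.repr y (β, k) := by
  let f₁ : B →ₗ[R] R :=
    Finsupp.lapply (α + β, i + k) ∘ₗ L.repr.toLinearMap ∘ₗ LieAlgebra.ad R B (L (α, i))
  let f₂ : B →ₗ[R] R := (blockCoeff α i β k : R) • (Finsupp.lapply (β, k) ∘ₗ L.repr.toLinearMap)
  suffices f₁ = f₂ from LinearMap.congr_fun this y
  refine L.ext fun ⟨γ, j⟩ => ?_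
  simp only [f₁, f₂, LinearMap.comp_apply, LieAlgebra.ad_apply, LinearMap.smul_apply,
    LinearEquiv.coe_coe, Finsupp.lapply_apply, hL α γ i j, map_smul, Module.Basis.repr_self,
    Finsupp.single_apply, Prod.mk.injEq, smul_eq_mul]
  by_cases h : γ = β ∧ j = k
  · obtain ⟨rfl, rfl⟩ := h
    simp
  · rw [if_neg (by omega), if_neg (by omega)]
    simp

theorem repr_lie_h (hL : IsBlockBasis L) (y : B) (q : ℤ × ℕ) :
    L.repr ⁅L (0, 0), y⁆ q = -((q.1 + q.2 : ℤ) : R) * L.repr y q := by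
  have h := hL.repr_lie_basis_apply 0 q.1 0 q.2 y
  simp only [zero_add, blockCoeff] at h
  rw [h]
  push_cast
  ring

theorem lie_h_of_isHomogeneous (hL : IsBlockBasis L) {n : ℤ} {x : B} (hx : IsHomogeneous L n x) :
    ⁅L (0, 0), x⁆ = -(n : R) • x := by
  refine L.ext_elem fun q => ?_
  rw [hL.repr_lie_h, map_smul, Finsupp.smul_apply, smul_eq_mul]
  by_cases hq : q.1 + q.2 = n
  · rw [hq]
  · simp [hx q hq]

theorem smul_apply_basis_eq_lie (hL : IsBlockBasis L) (D : LieDerivation R B B) {α β γ : ℤ}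
    {i j k : ℕ} (hD : D (L (α, i)) = 0) (hγ : α + β = γ) (hk : i + j = k) :
    (blockCoeff α i β j : R) • D (L (γ, k)) = ⁅L (α, i), D (L (β, j))⁆ := by
  subst hγ hk
  simpa [hL α β i j, hD] using D.apply_lie_eq_add (L (α, i)) (L (β, j))

end IsBlockBasis
end CommRing

section Field

variable {F B : Type*} [Field F] [CharZero F] [LieRing B] [LieAlgebra F B]
  {L : Module.Basis (ℤ × ℕ) F B}

namespace IsBlockBasis

theorem isHomogeneous_of_lie_h (hL : IsBlockBasis L) {n : ℤ} {x : B}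
    (hx : ⁅L (0, 0), x⁆ = -(n : F) • x) : IsHomogeneous L n x := by
  intro q hq
  have h := congrArg (L.repr · q) hx
  simp only [hL.repr_lie_h, map_smul, Finsupp.smul_apply, smul_eq_mul] at h
  have hne : ((q.1 + q.2 - n : ℤ) : F) ≠ 0 := Int.cast_ne_zero.mpr (sub_ne_zero.mpr hq)
  refine (mul_eq_zero.mp ?_).resolve_left hne
  push_cast at h ⊢
  linear_combination -h

theorem isHomogeneous_apply_basis (hL : IsBlockBasis L) {D : LieDerivation F B B}
    (hD : D (L (0, 0)) = 0) (β : ℤ) (j : ℕ) : IsHomogeneous L (β + j) (D (L (β, j))) := by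
  refine hL.isHomogeneous_of_lie_h ?_
  rw [← hL.smul_apply_basis_eq_lie D hD (zero_add β) (zero_add j), blockCoeff]
  congr 1
  push_cast
  ring

theorem eq_zero_of_lie_basis_eq_zero (hL : IsBlockBasis L) {α n : ℤ} {i : ℕ} {y : B}
    (hy : IsHomogeneous L n y) (hc : ∀ k : ℕ, blockCoeff α i (n - k) k ≠ 0)
    (h : ⁅L (α, i), y⁆ = 0) : y = 0 := by
  refine L.ext_elem fun ⟨γ, k⟩ => ?_
  by_cases hq : γ + k = n
  · obtain rfl : γ = n - k := by omega
    have hrepr := hL.repr_lie_basis_apply α (n - k) i k y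
    rw [h, map_zero, Finsupp.zero_apply, eq_comm] at hrepr
    simpa using (mul_eq_zero.mp hrepr).resolve_left (Int.cast_ne_zero.mpr (hc k))
  · simpa using hy _ hq

theorem repr_apply_h_eq_zero (hL : IsBlockBasis L) (d : LieDerivation F B B) {q : ℤ × ℕ}
    (hq : q.1 + q.2 = 0) : L.repr (d (L (0, 0))) q = 0 := by
  obtain ⟨β, j⟩ := q
  have hbr : ⁅L (0, 0), L (1, 0)⁆ = -L (1, 0) := by simp [hL 0 1 0 0, blockCoeff]
  have h := congrArg (L.repr · (1 + β, 0 + j)) (d.apply_lie_eq_add (L (0, 0)) (L (1, 0)))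
  rw [hbr, ← lie_skew (d (L (0, 0)))] at h
  simp only [map_neg, map_add, Finsupp.neg_apply, Finsupp.add_apply] at h
  rw [hL.repr_lie_basis_apply, hL.repr_lie_h] at h
  simp only [blockCoeff, zero_add] at h
  have hq' : (β : F) + j = 0 := by exact_mod_cast hq
  have hne : ((1 - β : ℤ) : F) ≠ 0 := Int.cast_ne_zero.mpr (by omega)
  refine (mul_eq_zero.mp ?_).resolve_left hne
  push_cast at h ⊢
  linear_combination h - L.repr (d (L (1, 0))) (1 + β, j) * hq'

theorem exists_lie_h_eq (hL : IsBlockBasis L) (x : B)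
    (hx : ∀ q : ℤ × ℕ, q.1 + q.2 = 0 → L.repr x q = 0) : ∃ u : B, ⁅u, L (0, 0)⁆ = x := by
  obtain ⟨u, hu⟩ := L.exists_repr_eq (fun q => ((q.1 + q.2 : ℤ) : F)⁻¹ * L.repr x q)
    ((L.repr x).hasFiniteSupport.subset (Function.support_mul_subset_right _ _))
  refine ⟨u, L.ext_elem fun q => ?_⟩
  rw [← lie_skew, map_neg, Finsupp.neg_apply, hL.repr_lie_h, hu, neg_mul, neg_neg]
  by_cases hq : q.1 + q.2 = 0
  · simp [hq, hx q hq]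
  · exact mul_inv_cancel_left₀ (Int.cast_ne_zero.mpr hq) _

theorem exists_lie_t_eq (hL : IsBlockBasis L) {x : B} (hx : IsHomogeneous L 1 x) (w : F) :
    ∃ u : B, IsHomogeneous L 0 u ∧ L.repr u (0, 0) = w ∧
      ⁅u, L (1, 0)⁆ = x - (L.repr x (1, 0) + w) • L (1, 0) := by
  -- `⁅L (β, k), t⁆ = (β - 1) • L (β + 1, k)`: away from `(0, 0)`, shift and divide by `β - 1`.
  let f : ℤ × ℕ → F := fun q => if q = (0, 0) then w else L.repr x (q.1 + 1, q.2) / (q.1 - 1)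
  have hf : (Function.support f).Finite := by
    refine (((L.repr x).hasFiniteSupport.image fun q => (q.1 - 1, q.2)).insert (0, 0)).subset ?_
    intro q hq
    by_cases h0 : q = (0, 0)
    · exact Or.inl h0
    · refine Or.inr ⟨(q.1 + 1, q.2), ?_, by simp⟩
      simp only [f, Function.mem_support, if_neg h0] at hq
      exact (div_ne_zero_iff.mp hq).1
  obtain ⟨u, hu⟩ := L.exists_repr_eq f hf
  refine ⟨u, fun q hq => ?_, by simp [hu, f], L.ext_elem fun ⟨γ, k⟩ => ?_⟩
  · have h0 : q ≠ (0, 0) := by rintro rfl; exact hq rfl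
    rw [hu, show f q = _ from if_neg h0, hx (q.1 + 1, q.2) (by simp only; omega), zero_div]
  obtain ⟨β, rfl⟩ : ∃ β, γ = 1 + β := ⟨γ - 1, by ring⟩
  rw [← lie_skew, map_neg, Finsupp.neg_apply, ← zero_add k, hL.repr_lie_basis_apply, hu]
  simp only [f, blockCoeff, map_sub, map_smul, Finsupp.sub_apply, Finsupp.smul_apply,
    Module.Basis.repr_self, Finsupp.single_apply, Prod.mk.injEq, zero_add, smul_eq_mul]
  by_cases h0 : β = 0 ∧ k = 0
  · obtain ⟨rfl, rfl⟩ := h0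
    simp
  rw [if_neg (by simpa using h0), if_neg (by omega), mul_zero, sub_zero, add_comm β 1]
  by_cases hβ : β = 1
  · subst hβ
    simp [hx (2, k) (by simp only; omega)]
  · have hβ' : (β : F) - 1 ≠ 0 := sub_ne_zero.mpr (by exact_mod_cast hβ)
    push_cast
    field_simp
    ring

theorem apply_basis_zero_eq_zero (hL : IsBlockBasis L) {D : LieDerivation F B B}
    (hDh : D (L (0, 0)) = 0) (hDt : D (L (1, 0)) = 0) (β : ℤ) : D (L (β, 0)) = 0 := by
  have low : ∀ n : ℕ, D (L (1 - n, 0)) = 0 := by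
    intro n
    induction n with
    | zero => simpa using hDt
    | succ n ih =>
      have h := hL.smul_apply_basis_eq_lie D hDt (β := -n) (γ := 1 - n) (j := 0) (by ring) rfl
      rw [ih, smul_zero, eq_comm] at h
      rw [show 1 - ((n + 1 : ℕ) : ℤ) = -n by push_cast; ring]
      refine hL.eq_zero_of_lie_basis_eq_zero (hL.isHomogeneous_apply_basis hDh _ _) (fun k => ?_) h
      simp only [blockCoeff]
      omega
  have hDm : D (L (-1, 0)) = 0 := by simpa using low 2
  have high : ∀ n : ℕ, D (L (1 + n, 0)) = 0 := by
    intro n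
    induction n with
    | zero => simpa using hDt
    | succ n ih =>
      have h := hL.smul_apply_basis_eq_lie D hDm (β := 2 + n) (γ := 1 + n) (j := 0) (by ring) rfl
      rw [ih, smul_zero, eq_comm] at h
      rw [show 1 + ((n + 1 : ℕ) : ℤ) = 2 + n by push_cast; ring]
      refine hL.eq_zero_of_lie_basis_eq_zero (hL.isHomogeneous_apply_basis hDh _ _) (fun k => ?_) h
      simp only [blockCoeff]
      omega
  rcases le_or_gt β 1 with hβ | hβ
  · obtain ⟨n, rfl⟩ : ∃ n : ℕ, β = 1 - n := ⟨(1 - β).toNat, by omega⟩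
    exact low n
  · obtain ⟨n, rfl⟩ : ∃ n : ℕ, β = 1 + n := ⟨(β - 1).toNat, by omega⟩
    exact high n

theorem apply_s_eq_zero (hL : IsBlockBasis L) {D : LieDerivation F B B}
    (hDh : D (L (0, 0)) = 0) (hDt : D (L (1, 0)) = 0) (hDs : L.repr (D (L (0, 1))) (0, 1) = 0) :
    D (L (0, 1)) = 0 := by
  have h0 := hL.apply_basis_zero_eq_zero hDh hDt
  set y := D (L (0, 1))
  have h1 := hL.smul_apply_basis_eq_lie D (h0 1) (β := 0) (γ := 1) (j := 1) (by ring) rfl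
  have h3 := hL.smul_apply_basis_eq_lie D (h0 3) (β := 0) (γ := 3) (j := 1) (by ring) rfl
  have h21 := hL.smul_apply_basis_eq_lie D (h0 2) (β := 1) (γ := 3) (j := 1) (by ring) rfl
  norm_num [blockCoeff] at h1 h3 h21
  have key : (2 : F) • ⁅L (3, 0), y⁆ = (5 : F) • ⁅L (2, 0), ⁅L (1, 0), y⁆⁆ := by
    rw [← h3, ← h1, ← h21, smul_smul, smul_smul, mul_comm]
  refine L.ext_elem fun ⟨γ, m⟩ => ?_
  by_cases hq : γ + m = 1
  swap
  · simpa using hL.isHomogeneous_apply_basis hDh 0 1 (γ, m) (by simpa using hq)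
  obtain rfl : γ = 1 - m := by omega
  by_cases hm : m = 1
  · subst hm
    simpa using hDs
  have e3 := hL.repr_lie_basis_apply 3 (1 - m) 0 m y
  have e1 := hL.repr_lie_basis_apply 1 (1 - m) 0 m y
  rw [zero_add m] at e1
  have e2 := hL.repr_lie_basis_apply 2 (1 + (1 - m)) 0 m ⁅L (1, 0), y⁆
  rw [show 2 + (1 + (1 - (m : ℤ))) = 3 + (1 - m) by ring] at e2
  -- In coordinate `(4 - m, m)`, `key` reads `2 (3m + 2) c = 10 m² c`, `c` the `(1 - m, m)`-coordinate
  -- of `y`.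
  have hc := congrArg (L.repr · (3 + (1 - m), 0 + m)) key
  simp only [map_smul, Finsupp.smul_apply, smul_eq_mul, e1, e2, e3, blockCoeff] at hc
  have hne : (((5 * m + 2) * (m - 1) : ℤ) : F) ≠ 0 :=
    Int.cast_ne_zero.mpr (mul_ne_zero (by omega) (by omega))
  rw [map_zero, Finsupp.zero_apply]
  refine (mul_eq_zero.mp ?_).resolve_left hne
  push_cast at hc ⊢
  linear_combination -hc / 2

theorem eq_zero_of_apply_h_t_s (hL : IsBlockBasis L) {D : LieDerivation F B B}
    (hDh : D (L (0, 0)) = 0) (hDt : D (L (1, 0)) = 0) (hDs : L.repr (D (L (0, 1))) (0, 1) = 0) :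
    D = 0 := by
  have h0 := hL.apply_basis_zero_eq_zero hDh hDt
  have hs := hL.apply_s_eq_zero hDh hDt hDs
  have h1 : ∀ β, D (L (β, 1)) = 0 := fun β => by
    have h := hL.smul_apply_basis_eq_lie D (h0 β) (β := 0) (γ := β) (j := 1) (add_zero β) rfl
    rw [hs, lie_zero] at h
    exact (smul_eq_zero.mp h).resolve_left (Int.cast_ne_zero.mpr (by simp only [blockCoeff]; omega))
  have hall : ∀ j β, D (L (β, j)) = 0 := by
    intro j
    induction j with
    | zero => exact h0
    | succ j ih =>
      intro δ
      have r1 := hL.smul_apply_basis_eq_lie D (ih δ) (β := 0) (γ := δ) (j := 1) (add_zero δ) rfl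
      have r2 := hL.smul_apply_basis_eq_lie D (ih (δ - 2)) (β := 2) (γ := δ) (j := 1) (by ring) rfl
      rw [hs, lie_zero] at r1
      rw [h1, lie_zero] at r2
      -- The two coefficients `2δ + j - 1` and `2δ - j - 7` never vanish together.
      by_cases hδ : blockCoeff δ j 0 1 = 0
      · refine (smul_eq_zero.mp r2).resolve_left (Int.cast_ne_zero.mpr ?_)
        simp only [blockCoeff] at hδ ⊢
        omega
      · exact (smul_eq_zero.mp r1).resolve_left (Int.cast_ne_zero.mpr hδ)
  have hlin : (D : B →ₗ[F] B) = 0 := L.ext fun q => hall q.2 q.1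
  exact LieDerivation.ext fun x => LinearMap.congr_fun hlin x

theorem exists_eq_ad_add_smul_of_apply_h_eq_zero (hL : IsBlockBasis L) {d₀ : LieDerivation F B B}
    (hd₀ : ∀ (β : ℤ) (j : ℕ), d₀ (L (β, j)) = (β : F) • L (β, j)) {d : LieDerivation F B B}
    (hd : d (L (0, 0)) = 0) : ∃ (u : B) (lam : F), d = LieDerivation.ad F B u + lam • d₀ := by
  set w := -L.repr (d (L (0, 1))) (0, 1)
  obtain ⟨u, hu0, huw, hut⟩ :=
    hL.exists_lie_t_eq (by simpa using hL.isHomogeneous_apply_basis hd 1 0) w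
  refine ⟨u, L.repr (d (L (1, 0))) (1, 0) + w, ?_⟩
  rw [← sub_eq_zero, ← sub_sub]
  refine hL.eq_zero_of_apply_h_t_s ?_ ?_ ?_
  · have huh : ⁅u, L (0, 0)⁆ = 0 := by
      rw [← lie_skew, hL.lie_h_of_isHomogeneous hu0]
      simp
    simp [hd, hd₀, huh]
  · simp [hut, hd₀]
  · have hus := hL.repr_lie_basis_apply 0 0 1 0 u
    rw [add_zero, add_zero, ← lie_skew, map_neg, Finsupp.neg_apply, huw] at hus
    norm_num [blockCoeff, w] at hus
    simp [hd₀, hus]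

end IsBlockBasis
end Field
end BlockLieAlgebra

theorem derivation_eq_inner_add_smul_d0_general
    {F : Type*} [Field F] [CharZero F]
    {B : Type*} [LieRing B] [LieAlgebra F B]
    (L : Module.Basis (ℤ × ℕ) F B)
    (hL : ∀ (α β : ℤ) (i j : ℕ),
      ⁅L (α, i), L (β, j)⁆ =
        (((α - 1) * (j + 1) - (β - 1) * (i + 1) : ℤ) : F) • L (α + β, i + j))
    (d₀ : LieDerivation F B B)
    (hd₀ : ∀ (β : ℤ) (j : ℕ), d₀ (L (β, j)) = (β : F) • L (β, j)) :
    ∀ d : LieDerivation F B B, ∃ (u : B) (lam : F),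
      ∀ x : B, d x = ⁅u, x⁆ + lam • d₀ x := by
  have hL : BlockLieAlgebra.IsBlockBasis L := hL
  intro d
  obtain ⟨u₁, hu₁⟩ := hL.exists_lie_h_eq (d (L (0, 0))) fun q hq => hL.repr_apply_h_eq_zero d hq
  obtain ⟨u₂, lam, h⟩ := hL.exists_eq_ad_add_smul_of_apply_h_eq_zero hd₀
    (d := d - LieDerivation.ad F B u₁) (by simp [hu₁])
  refine ⟨u₁ + u₂, lam, fun x => ?_⟩
  have hx := congrArg (· x) h
  simp only [LieDerivation.sub_apply, LieDerivation.add_apply, LieDerivation.smul_apply,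
    LieDerivation.ad_apply_apply] at hx
  rw [add_lie, add_assoc, ← hx, add_sub_cancel]

/-- Theorem 2.1, existence part. Every derivation `d` of the Block type
Lie algebra `B` can be written as `d = ad u + λ • d₀` for some `u ∈ B` and `λ ∈ F`, where
`d₀` is the derivation determined by `d₀ (L (β,j)) = β • L (β,j)`. -/
theorem derivation_eq_inner_add_smul_d0
    {F : Type*} [Field F] [IsAlgClosed F] [CharZero F]
    {B : Type*} [LieRing B] [LieAlgebra F B]
    (L : Module.Basis (ℤ × ℕ) F B)
    (hL : ∀ (α β : ℤ) (i j : ℕ),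
      ⁅L (α, i), L (β, j)⁆ =
        (((α - 1) * (j + 1) - (β - 1) * (i + 1) : ℤ) : F) • L (α + β, i + j))
    (d₀ : LieDerivation F B B)
    (hd₀ : ∀ (β : ℤ) (j : ℕ), d₀ (L (β, j)) = (β : F) • L (β, j)) :
    ∀ d : LieDerivation F B B, ∃ (u : B) (lam : F),
      ∀ x : B, d x = ⁅u, x⁆ + lam • d₀ x :=
  derivation_eq_inner_add_smul_d0_general L hL d₀ hd₀
end

section
/- (Theorem 2.1, cohomology part) The quotient of the F-vector space of derivations of B by the subspace of inner derivations is one-dimensional; in other words, the first cohomology group H¹(B;B) of B with coefficients in its adjoint module has dimension 1, spanned by the class of d₀. -/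
/-!
Since `ad (L 0)` acts on `L p` by `-deg p`, subtracting an inner derivation makes a derivation `D`
vanish on `L 0`, after which `D` preserves degrees; a second inner correction of degree `0` makes
it vanish on `L (1, 0)` too. Such a `D` kills the row `L (β, 0)`: for `β ≤ 1` and `β = 2` because
a homogeneous element of that degree commuting with `L (1, 0)`, resp. `L (-1, 0)`, is zero, and for
`β > 2` by bracketing with `L (1, 0)`. The same centralizer argument shows that `D` acts on
`L (1, 1)`, hence on `L (0, 1) = -¼ ⁅L (-1, 0), L (1, 1)⁆`, by a scalar `c`, and bracketing with
`L (0, 1)` and `L (1, 0)` spreads this to `D (L (β, j)) = c j L (β, j)`, i.e.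
`D = -c (d₀ + ad (L 0))`. Finally `d₀` is not inner: the `L (1, 0)`- and `L (0, 1)`-coefficients of
`ad u` on these two vectors are both `-u₀₀`, while `d₀` has `1` and `0`.
-/

theorem Module.Basis.exists_repr_eq_mul_repr_comp {ι R M : Type*} [Semiring R] [AddCommMonoid M]
    [Module R M] (b : Module.Basis ι R M) (x : M) (φ : ι → R) {e : ι → ι}
    (he : Function.Injective e) : ∃ u : M, ∀ i, b.repr u i = φ i * b.repr x (e i) := by
  have hfin : (Function.support fun i => φ i * b.repr x (e i)).Finite :=
    ((b.repr x).support.finite_toSet.preimage he.injOn).subset fun i hi => by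
      simpa using Function.support_mul_subset_right _ _ hi
  exact ⟨b.repr.symm (Finsupp.ofSupportFinite _ hfin), fun i => by
    simp [Finsupp.ofSupportFinite_coe]⟩

theorem LieDerivation.ext_of_basis {ι R L M : Type*} [CommRing R] [LieRing L] [LieAlgebra R L]
    [AddCommGroup M] [Module R M] [LieRingModule L M] [LieModule R L M] (b : Module.Basis ι R L)
    {D₁ D₂ : LieDerivation R L M} (h : ∀ i, D₁ (b i) = D₂ (b i)) : D₁ = D₂ :=
  LieDerivation.ext fun x => LinearMap.congr_fun (b.ext (f₁ := (D₁ : L →ₗ[R] M)) (f₂ := D₂) h) x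

namespace BlockLieAlgebra

def structConst (p q : ℤ × ℕ) : ℤ := (p.1 - 1) * (q.2 + 1) - (q.1 - 1) * (p.2 + 1)

def deg (p : ℤ × ℕ) : ℤ := p.1 + p.2

@[simp]
theorem deg_add (p q : ℤ × ℕ) : deg (p + q) = deg p + deg q := by
  simp only [deg, Prod.fst_add, Prod.snd_add, Nat.cast_add]
  ring

section Bracket

variable {F B : Type*} [Field F] [LieRing B] [LieAlgebra F B] {L : Module.Basis (ℤ × ℕ) F B}
  (hL : ∀ p q, ⁅L p, L q⁆ = (structConst p q : F) • L (p + q))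
include hL

theorem repr_lie_basis_add (x : B) (p q : ℤ × ℕ) :
    L.repr ⁅x, L q⁆ (p + q) = structConst p q * L.repr x p := by
  induction L.mem_span x using Submodule.span_induction with
  | mem _ hx =>
    obtain ⟨s, rfl⟩ := hx
    rcases eq_or_ne s p with rfl | hsp
    · simp [hL]
    · simp [hL, hsp]
  | zero => simp
  | add x y _ _ hx hy => simp [add_lie, hx, hy, mul_add]
  | smul c x _ hx => simp [smul_lie, hx, mul_left_comm]

theorem repr_lie_basis_zero (x : B) (r : ℤ × ℕ) :
    L.repr ⁅x, L 0⁆ r = deg r * L.repr x r := by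
  rw [← add_zero r, repr_lie_basis_add hL, add_zero]
  push_cast [structConst, deg, Prod.fst_zero, Prod.snd_zero]
  ring

theorem basis_zero_lie_basis (p : ℤ × ℕ) : ⁅L 0, L p⁆ = -(deg p : F) • L p := by
  rw [hL, zero_add]
  congr 1
  push_cast [structConst, deg, Prod.fst_zero, Prod.snd_zero]
  ring

theorem repr_eq_zero_of_lie_basis_eq_zero {x : B} {q : ℤ × ℕ} (h : ⁅x, L q⁆ = 0) {r : ℤ × ℕ}
    (hr : (structConst r q : F) ≠ 0) : L.repr x r = 0 := by
  have := repr_lie_basis_add hL x r q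
  rw [h, map_zero, Finsupp.zero_apply, eq_comm, mul_eq_zero] at this
  exact this.resolve_left hr

variable (D : LieDerivation F B B)

theorem apply_basis_add_eq_smul {p q : ℤ × ℕ} {a b : F} (hp : D (L p) = a • L p)
    (hq : D (L q) = b • L q) (hpq : (structConst p q : F) ≠ 0) :
    D (L (p + q)) = (a + b) • L (p + q) := by
  have := D.apply_lie_eq_add (L p) (L q)
  rw [hp, hq, lie_smul, smul_lie, hL, map_smul] at this
  refine smul_right_injective B hpq ?_
  simp only [this]
  module

theorem lie_apply_basis_of_apply_eq_zero {p : ℤ × ℕ} (hp : D (L p) = 0) (q : ℤ × ℕ) :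
    ⁅D (L q), L p⁆ = (structConst q p : F) • D (L (q + p)) := by
  simpa [hp, hL] using (D.apply_lie_eq_add (L q) (L p)).symm

theorem repr_lie_apply_basis_zero (p r : ℤ × ℕ) :
    L.repr ⁅D (L 0), L p⁆ r = (deg r - deg p) * L.repr (D (L p)) r := by
  have h : ⁅D (L 0), L p⁆ = ⁅D (L p), L 0⁆ - (deg p : F) • D (L p) := by
    have := D.apply_lie_eq_add (L 0) (L p)
    rw [basis_zero_lie_basis hL, map_smul, ← lie_skew] at this
    linear_combination (norm := module) -this
  rw [h, map_sub, Finsupp.sub_apply, repr_lie_basis_zero hL, map_smul, Finsupp.smul_apply,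
    smul_eq_mul]
  ring

variable {D} in
theorem ad_ne_of_apply_basis_eq_fst_smul (hD : ∀ p, D (L p) = (p.1 : F) • L p) (u : B) :
    LieDerivation.ad F B u ≠ D := by
  intro hu
  have key : ∀ q : ℤ × ℕ, L.repr (D (L q)) q = structConst 0 q * L.repr u 0 := fun q => by
    simpa [← hu] using repr_lie_basis_add hL u 0 q
  have h10 : (1 : F) = -L.repr u 0 := by simpa [hD, structConst] using key (1, 0)
  have h01 : (0 : F) = -L.repr u 0 := by simpa [hD, structConst] using key (0, 1)
  exact one_ne_zero (h10.trans h01.symm)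

end Bracket

section Derivation

variable {F B : Type*} [Field F] [CharZero F] [LieRing B] [LieAlgebra F B]
  {L : Module.Basis (ℤ × ℕ) F B} (hL : ∀ p q, ⁅L p, L q⁆ = (structConst p q : F) • L (p + q))
  (D : LieDerivation F B B)
include hL

theorem repr_apply_basis_zero_of_deg_eq_zero {s : ℤ × ℕ} (hs : deg s = 0) :
    L.repr (D (L 0)) s = 0 := by
  have key := repr_lie_basis_add hL (D (L 0)) s (1, 0)
  rw [repr_lie_apply_basis_zero hL, deg_add, hs, zero_add, sub_self, zero_mul, eq_comm,
    mul_eq_zero] at key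
  refine key.resolve_left ?_
  simp only [deg] at hs
  simp only [structConst, Int.cast_eq_zero]
  omega

theorem repr_apply_basis_eq_zero_of_deg_ne (h0 : D (L 0) = 0) {p r : ℤ × ℕ}
    (hpr : deg r ≠ deg p) : L.repr (D (L p)) r = 0 := by
  have := repr_lie_apply_basis_zero hL D p r
  rw [h0, zero_lie, map_zero, Finsupp.zero_apply, eq_comm, mul_eq_zero] at this
  exact this.resolve_left (by exact_mod_cast sub_ne_zero.mpr hpr)

theorem exists_sub_ad_apply_basis_zero_eq_zero :
    ∃ u, (D - LieDerivation.ad F B u) (L 0) = 0 := by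
  obtain ⟨u, hu⟩ := L.exists_repr_eq_mul_repr_comp (D (L 0)) (fun r => (deg r : F)⁻¹)
    Function.injective_id
  refine ⟨u, L.ext_elem fun s => ?_⟩
  rw [LinearEquiv.map_zero, Finsupp.zero_apply]
  rcases eq_or_ne (deg s) 0 with hs | hs
  · exact repr_apply_basis_zero_of_deg_eq_zero hL _ hs
  · rw [LieDerivation.sub_apply, LieDerivation.ad_apply_apply, map_sub, Finsupp.sub_apply,
      repr_lie_basis_zero hL, hu, id, mul_inv_cancel_left₀ (Int.cast_ne_zero.mpr hs), sub_self]

theorem exists_sub_ad_apply_eq_zero_of_apply_basis_zero_eq_zero (h0 : D (L 0) = 0) :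
    ∃ u, (D - LieDerivation.ad F B u) (L 0) = 0 ∧ (D - LieDerivation.ad F B u) (L (1, 0)) = 0 := by
  obtain ⟨u, hu⟩ := L.exists_repr_eq_mul_repr_comp (D (L (1, 0))) (fun s => (s.1 - 1 : F)⁻¹)
    (add_left_injective (1, 0))
  have hD : ∀ s, deg s ≠ 0 → L.repr (D (L (1, 0))) (s + (1, 0)) = 0 := fun s hs =>
    repr_apply_basis_eq_zero_of_deg_ne hL D h0 (by simpa using hs)
  refine ⟨u, L.ext_elem fun s => ?_, L.ext_elem fun r => ?_⟩ <;>
    simp only [LieDerivation.sub_apply, LieDerivation.ad_apply_apply, map_sub, map_zero,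
      Finsupp.sub_apply, Finsupp.zero_apply]
  · rcases eq_or_ne (deg s) 0 with hs | hs
    · simp [h0, repr_lie_basis_zero hL, hs]
    · simp [h0, repr_lie_basis_zero hL, hu, hD s hs]
  · obtain ⟨s, rfl⟩ : ∃ s, r = s + (1, 0) := ⟨(r.1 - 1, r.2), by simp⟩
    rw [repr_lie_basis_add hL, hu]
    rcases eq_or_ne s.1 1 with hs | hs
    · simp [hD s (by simp only [deg, hs]; omega)]
    · rw [show (structConst s (1, 0) : F) = s.1 - 1 by simp [structConst],
        mul_inv_cancel_left₀ (sub_ne_zero.mpr (by exact_mod_cast hs)), sub_self]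

theorem exists_sub_ad_apply_eq_zero :
    ∃ u, (D - LieDerivation.ad F B u) (L 0) = 0 ∧ (D - LieDerivation.ad F B u) (L (1, 0)) = 0 := by
  obtain ⟨u₁, h₁⟩ := exists_sub_ad_apply_basis_zero_eq_zero hL D
  obtain ⟨u₂, h₂⟩ := exists_sub_ad_apply_eq_zero_of_apply_basis_zero_eq_zero hL _ h₁
  exact ⟨u₁ + u₂, by simpa only [map_add, sub_sub] using h₂⟩

variable {D}

theorem apply_basis_eq_zero_of_apply_basis_add_eq_zero (h0 : D (L 0) = 0) {p q : ℤ × ℕ}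
    (hp : D (L p) = 0) (hqp : D (L (q + p)) = 0)
    (hK : ∀ r, deg r = deg q → structConst r p ≠ 0) : D (L q) = 0 := by
  have hcomm := lie_apply_basis_of_apply_eq_zero hL D hp q
  rw [hqp, smul_zero] at hcomm
  refine L.ext_elem fun r => ?_
  rw [LinearEquiv.map_zero, Finsupp.zero_apply]
  by_cases hr : deg r = deg q
  · exact repr_eq_zero_of_lie_basis_eq_zero hL hcomm (Int.cast_ne_zero.mpr (hK r hr))
  · exact repr_apply_basis_eq_zero_of_deg_ne hL D h0 hr

theorem apply_basis_fst_eq_zero (h0 : D (L 0) = 0) (h1 : D (L (1, 0)) = 0) (β : ℤ) :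
    D (L (β, 0)) = 0 := by
  have hle : ∀ β ≤ 1, D (L (β, 0)) = 0 := by
    intro β hβ
    induction β, hβ using Int.leInductionDown with
    | base => exact h1
    | pred β hβ ih =>
      refine apply_basis_eq_zero_of_apply_basis_add_eq_zero hL h0 h1 (by simpa using ih) ?_
      intro r hr
      simp only [deg] at hr
      simp only [structConst]
      omega
  have h2 : D (L (2, 0)) = 0 := by
    refine apply_basis_eq_zero_of_apply_basis_add_eq_zero hL h0 (hle (-1) (by norm_num))
      (by simpa using h1) ?_
    intro r hr
    simp only [deg] at hr
    simp only [structConst]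
    omega
  rcases le_or_gt β 1 with hβ | hβ
  · exact hle β hβ
  induction β, (show 2 ≤ β by omega) using Int.leInduction with
  | base => exact h2
  | succ β hβ ih =>
    have := apply_basis_add_eq_smul hL D (p := (1, 0)) (q := (β, 0)) (a := 0) (b := 0)
      (by simp [h1]) (by simp [ih (by omega)])
      (Int.cast_ne_zero.mpr (by simp only [structConst]; omega))
    simpa [add_comm] using this

theorem exists_apply_basis_zero_one_eq_smul (h0 : D (L 0) = 0) (h1 : D (L (1, 0)) = 0) :
    ∃ c : F, D (L (0, 1)) = c • L (0, 1) := by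
  set c := L.repr (D (L (1, 1))) (1, 1)
  have hcomm := lie_apply_basis_of_apply_eq_zero hL D h1 (1, 1)
  rw [show structConst (1, 1) (1, 0) = 0 by simp [structConst], Int.cast_zero, zero_smul]
    at hcomm
  have h11 : D (L (1, 1)) = c • L (1, 1) := by
    refine L.ext_elem fun r => ?_
    rw [map_smul, L.repr_self, Finsupp.smul_apply, smul_eq_mul, Finsupp.single_apply]
    split_ifs with hr
    · rw [← hr, mul_one]
    by_cases hdeg : deg r = 2
    · rw [mul_zero]
      refine repr_eq_zero_of_lie_basis_eq_zero hL hcomm (Int.cast_ne_zero.mpr ?_)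
      simp only [deg] at hdeg
      simp only [Prod.ext_iff] at hr
      simp only [structConst]
      omega
    · rw [mul_zero]
      exact repr_apply_basis_eq_zero_of_deg_ne hL D h0 (by simpa [deg] using hdeg)
  refine ⟨c, ?_⟩
  have := apply_basis_add_eq_smul hL D (p := (-1, 0)) (q := (1, 1)) (a := 0)
    (apply_basis_fst_eq_zero hL h0 h1 (-1) ▸ (zero_smul F _).symm) h11
    (Int.cast_ne_zero.mpr (by simp [structConst]))
  simpa using this

theorem exists_apply_basis_eq_smul (h0 : D (L 0) = 0) (h1 : D (L (1, 0)) = 0) :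
    ∃ c : F, ∀ p, D (L p) = (c * p.2) • L p := by
  obtain ⟨c, hc⟩ := exists_apply_basis_zero_one_eq_smul hL h0 h1
  refine ⟨c, fun ⟨β, j⟩ => ?_⟩
  induction j generalizing β with
  | zero => simp [apply_basis_fst_eq_zero hL h0 h1]
  | succ j ih =>
    have generic : ∀ β : ℤ, 2 * β ≠ 1 - j →
        D (L (β, j + 1)) = (c * (j + 1 : ℕ)) • L (β, j + 1) := by
      intro β hβ
      have := apply_basis_add_eq_smul hL D (p := (0, 1)) (q := (β, j)) hc (ih β)
        (Int.cast_ne_zero.mpr (by simp only [structConst]; omega))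
      rw [show ((0, 1) + (β, j) : ℤ × ℕ) = (β, j + 1) by simp [add_comm]] at this
      rw [this]
      congr 1
      push_cast
      ring
    by_cases hβ : 2 * β = 1 - j
    · have := apply_basis_add_eq_smul hL D (p := (1, 0)) (q := (β - 1, j + 1)) (a := 0)
        (by simp [h1]) (generic (β - 1) (by omega))
        (Int.cast_ne_zero.mpr (by simp only [structConst]; omega))
      simpa using this
    · exact generic β hβ

theorem exists_eq_smul_add_ad {d₀ : LieDerivation F B B}
    (hd₀ : ∀ p, d₀ (L p) = (p.1 : F) • L p) :
    ∃ (c : F) (u : B), D = c • d₀ + LieDerivation.ad F B u := by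
  obtain ⟨u, h0, h1⟩ := exists_sub_ad_apply_eq_zero hL D
  obtain ⟨c, hc⟩ := exists_apply_basis_eq_smul hL h0 h1
  have hE : D - LieDerivation.ad F B u = (-c) • d₀ + LieDerivation.ad F B ((-c) • L 0) := by
    refine LieDerivation.ext_of_basis L fun p => ?_
    rw [hc, LieDerivation.add_apply, LieDerivation.smul_apply, LieDerivation.ad_apply_apply,
      smul_lie, basis_zero_lie_basis hL, hd₀]
    simp only [deg]
    push_cast
    module
  refine ⟨-c, u + (-c) • L 0, ?_⟩
  rw [map_add, add_comm (LieDerivation.ad F B u), ← add_assoc, ← hE, sub_add_cancel]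

end Derivation

end BlockLieAlgebra

theorem first_cohomology_one_dimensional_general
    {F : Type*} [Field F] [CharZero F]
    {B : Type*} [LieRing B] [LieAlgebra F B]
    (L : Module.Basis (ℤ × ℕ) F B)
    (hL : ∀ (α β : ℤ) (i j : ℕ),
      ⁅L (α, i), L (β, j)⁆ =
        (((α - 1) * (j + 1) - (β - 1) * (i + 1) : ℤ) : F) • L (α + β, i + j))
    (d₀ : LieDerivation F B B)
    (hd₀ : ∀ (β : ℤ) (j : ℕ), d₀ (L (β, j)) = (β : F) • L (β, j)) :
    Module.rank F
        (LieDerivation F B B ⧸ LinearMap.range (LieDerivation.ad F B).toLinearMap) = 1 ∧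
      Submodule.span F
        {(LinearMap.range (LieDerivation.ad F B).toLinearMap).mkQ d₀} = ⊤ := by
  have hL' : ∀ p q, ⁅L p, L q⁆ = (BlockLieAlgebra.structConst p q : F) • L (p + q) :=
    fun p q => hL p.1 q.1 p.2 q.2
  have hd₀' : ∀ p : ℤ × ℕ, d₀ (L p) = (p.1 : F) • L p := fun p => hd₀ p.1 p.2
  set R := LinearMap.range (LieDerivation.ad F B).toLinearMap
  have hspan : ∀ w : LieDerivation F B B ⧸ R, ∃ c : F, c • R.mkQ d₀ = w := by
    intro w
    obtain ⟨D, rfl⟩ := R.mkQ_surjective w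
    obtain ⟨c, u, rfl⟩ := BlockLieAlgebra.exists_eq_smul_add_ad hL' (D := D) hd₀'
    have hu : R.mkQ (LieDerivation.ad F B u) = 0 := (Submodule.Quotient.mk_eq_zero R).mpr ⟨u, rfl⟩
    exact ⟨c, by rw [map_add, hu, add_zero, map_smul]⟩
  have hne : R.mkQ d₀ ≠ 0 := fun h => by
    obtain ⟨u, hu⟩ := (Submodule.Quotient.mk_eq_zero R).mp h
    exact BlockLieAlgebra.ad_ne_of_apply_basis_eq_fst_smul hL' hd₀' u hu
  exact ⟨rank_eq_one _ hne hspan,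
    eq_top_iff.mpr fun w _ => Submodule.mem_span_singleton.mpr (hspan w)⟩

/-- Theorem 2.1, cohomology part. The quotient of the space of derivations
of the Block type Lie algebra `B` by the subspace of inner derivations (the range of the
adjoint action `u ↦ ad u`) is one-dimensional, spanned by the class of the derivation `d₀`
determined by `d₀ (L (β,j)) = β • L (β,j)`.  In other words `dim H¹(B; B) = 1`. -/
theorem first_cohomology_one_dimensional
    {F : Type*} [Field F] [IsAlgClosed F] [CharZero F]
    {B : Type*} [LieRing B] [LieAlgebra F B]
    (L : Module.Basis (ℤ × ℕ) F B)
    (hL : ∀ (α β : ℤ) (i j : ℕ),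
      ⁅L (α, i), L (β, j)⁆ =
        (((α - 1) * (j + 1) - (β - 1) * (i + 1) : ℤ) : F) • L (α + β, i + j))
    (d₀ : LieDerivation F B B)
    (hd₀ : ∀ (β : ℤ) (j : ℕ), d₀ (L (β, j)) = (β : F) • L (β, j)) :
    Module.rank F
        (LieDerivation F B B ⧸ LinearMap.range (LieDerivation.ad F B).toLinearMap) = 1 ∧
      Submodule.span F
        {(LinearMap.range (LieDerivation.ad F B).toLinearMap).mkQ d₀} = ⊤ :=
  first_cohomology_one_dimensional_general L hL d₀ hd₀
end

section
/- (Lemma 2.2) Let d be a derivation of B of degree 0 (i.e., d(B_β) ⊆ B_β for all β ∈ ℤ) which preserves the filtration, i.e., d(B^{[j]}) ⊆ B^{[j]} for every j ∈ ℕ. Then d = ad_u + λ·d₀ for some u ∈ B and λ ∈ F. -/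
/-- The graded component `B_β = span {L (β, k) : k ∈ ℕ}` of the Block type Lie algebra. -/
def gradedComponent {F B : Type*} [Field F] [AddCommGroup B] [Module F B]
    (L : Module.Basis (ℤ × ℕ) F B) (β : ℤ) : Submodule F B :=
  Submodule.span F (Set.range fun k : ℕ => L (β, k))

/-- The filtration component `B^{[j]} = span {L (β, k) : β ∈ ℤ, k ∈ ℕ, k ≤ j}` of the Block
type Lie algebra. -/
def filtrationComponent {F B : Type*} [Field F] [AddCommGroup B] [Module F B]
    (L : Module.Basis (ℤ × ℕ) F B) (m : ℤ) : Submodule F B :=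
  Submodule.span F {x | ∃ (β : ℤ) (k : ℕ), (k : ℤ) ≤ m ∧ x = L (β, k)}

/-! Let `c(β, j, k)` be the coefficient of `L (β, k)` in `d (L (β, j))`; the two hypotheses say
that `d (L (β, j)) = ∑_{k ≤ j} c(β, j, k) • L (β, k)`. For any derivation, comparing coefficients
of `L (α + β, ·)` in the Leibniz rule for `⁅L (α, i), L (β, j)⁆` gives two facts: `c(β, j, j)` is
additive in `(β, j)` wherever the structure constant is nonzero, which forces
`c(β, j, j) = β A + j C` with `A = c(1, 0, 0)`, `C = c(0, 1, 1)`; and, using brackets with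
`L (α, 0)`, the coefficients `c(β, j, k)` with `k < j` vanish. Hence `d` acts on `L (β, j)` by the
scalar `β A + j C`, and so does `ad (-C • L (0, 0)) + (A - C) • d₀`. -/

section Additive

variable {M : Type*} [AddCommGroup M]

theorem eq_zsmul_of_map_add_of_ne {g : ℤ → M}
    (hg : ∀ α β, α ≠ β → g (α + β) = g α + g β) (n : ℤ) : g n = n • g 1 := by
  have g0 : g 0 = 0 := by simpa using hg 1 0 one_ne_zero
  have gneg : g (-1) = -g 1 := by
    have := hg 1 (-1) (by norm_num)
    rw [add_neg_cancel, g0] at this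
    exact eq_neg_of_add_eq_zero_right this.symm
  -- `g 2` is not reachable as `g (1 + 1)`; go round through negative arguments instead
  have g2 : g 2 = 2 • g 1 := by
    have h1 := hg (-4) 2 (by norm_num)
    have h2 := hg (-3) (-1) (by norm_num)
    have h3 := hg (-2) (-1) (by norm_num)
    norm_num at h1 h2 h3
    linear_combination (norm := module) -h1 - h2 - h3 - 2 • gneg
  have step : ∀ m, g (m + 1) = g m + g 1 := by
    intro m
    by_cases hm : m = 1
    · subst hm; norm_num [g2, two_smul]
    · exact hg m 1 hm
  induction n using Int.induction_on with
  | zero => simp [g0]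
  | succ m ih => rw [step, ih, add_smul, one_smul]
  | pred m ih =>
    have := step (-m - 1)
    rw [sub_add_cancel, ih] at this
    rw [sub_smul, one_smul, this]; abel

theorem eq_zsmul_add_nsmul_of_map_add {f : ℤ → ℕ → M}
    (hf : ∀ (α : ℤ) (i : ℕ) (β : ℤ) (j : ℕ),
      (α - 1) * ((j : ℤ) + 1) ≠ (β - 1) * ((i : ℤ) + 1) → f (α + β) (i + j) = f α i + f β j)
    (β : ℤ) (j : ℕ) :
    f β j = β • f 1 0 + j • f 0 1 := by
  have hf0 : ∀ γ, f γ 0 = γ • f 1 0 :=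
    eq_zsmul_of_map_add_of_ne fun α β h ↦ by simpa using hf α 0 β 0 (by simpa using h)
  have hf1 : ∀ γ, f γ 1 = γ • f 1 0 + f 0 1 := fun γ ↦ by
    rw [← hf0 γ]
    simpa using hf γ 0 0 1 (by push_cast; omega)
  induction j generalizing β with
  | zero => simpa using hf0 β
  | succ j ih =>
    by_cases hβ : β = 2
    · subst hβ
      have h := hf 3 j (-1) 1 (by push_cast; omega)
      norm_num at h
      rw [h, ih 3, hf1 (-1)]
      module
    · have h := hf (β - 1) j 1 1 (by simp; omega)
      rw [sub_add_cancel] at h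
      rw [h, ih (β - 1), hf1 1]
      module

end Additive

section Components

variable {F B : Type*} [Field F] [AddCommGroup B] [Module F B] (L : Module.Basis (ℤ × ℕ) F B)

theorem gradedComponent_eq_span_image (β : ℤ) :
    gradedComponent L β = Submodule.span F (L '' {p | p.1 = β}) := by
  rw [gradedComponent]
  congr 1
  ext x
  simp [eq_comm]

theorem filtrationComponent_eq_span_image (m : ℤ) :
    filtrationComponent L m = Submodule.span F (L '' {p | (p.2 : ℤ) ≤ m}) := by
  rw [filtrationComponent]
  congr 1
  ext x
  simp [eq_comm]

theorem repr_eq_zero_of_mem_gradedComponent {β γ : ℤ} {x : B}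
    (hx : x ∈ gradedComponent L β) (hγ : γ ≠ β) (k : ℕ) : L.repr x (γ, k) = 0 := by
  rw [gradedComponent_eq_span_image, Module.Basis.mem_span_image] at hx
  by_contra h
  exact hγ (hx (Finsupp.mem_support_iff.mpr h))

theorem repr_eq_zero_of_mem_filtrationComponent {m : ℤ} {x : B}
    (hx : x ∈ filtrationComponent L m) (γ : ℤ) {k : ℕ} (hk : m < k) : L.repr x (γ, k) = 0 := by
  rw [filtrationComponent_eq_span_image, Module.Basis.mem_span_image] at hx
  by_contra h
  exact (hx (Finsupp.mem_support_iff.mpr h)).not_gt hk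

end Components

section BlockBasis

variable {F B : Type*} [Field F] [LieRing B] [LieAlgebra F B]

def IsBlockBasis (L : Module.Basis (ℤ × ℕ) F B) : Prop :=
  ∀ (α β : ℤ) (i j : ℕ),
    ⁅L (α, i), L (β, j)⁆ =
      (((α - 1) * (j + 1) - (β - 1) * (i + 1) : ℤ) : F) • L (α + β, i + j)

namespace IsBlockBasis

variable {L : Module.Basis (ℤ × ℕ) F B}

theorem repr_lie_add (hL : IsBlockBasis L) (α : ℤ) (i : ℕ) (x : B) (γ : ℤ) (m : ℕ) :
    L.repr ⁅L (α, i), x⁆ (α + γ, i + m) =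
      (((α - 1) * (m + 1) - (γ - 1) * (i + 1) : ℤ) : F) * L.repr x (γ, m) := by
  have key : (L.coord (α + γ, i + m)).comp (LieAlgebra.ad F B (L (α, i))) =
      (((α - 1) * (m + 1) - (γ - 1) * (i + 1) : ℤ) : F) • L.coord (γ, m) := by
    refine L.ext fun ⟨β, j⟩ ↦ ?_
    simp only [LinearMap.comp_apply, LieAlgebra.ad_apply, hL α β i j, map_smul,
      LinearMap.smul_apply, Module.Basis.coord_apply, Module.Basis.repr_self,
      Finsupp.single_apply, Prod.mk.injEq, smul_eq_mul]
    by_cases h : β = γ ∧ j = m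
    · obtain ⟨rfl, rfl⟩ := h; simp
    · rw [if_neg (by omega), if_neg (by omega)]; simp
  simpa using LinearMap.congr_fun key x

theorem repr_lie_of_lt (hL : IsBlockBasis L) (α : ℤ) {i : ℕ} (x : B) (γ : ℤ) {m : ℕ}
    (hm : m < i) :
    L.repr ⁅L (α, i), x⁆ (γ, m) = 0 := by
  have key : (L.coord (γ, m)).comp (LieAlgebra.ad F B (L (α, i))) = 0 := by
    refine L.ext fun ⟨β, j⟩ ↦ ?_
    simp only [LinearMap.comp_apply, LieAlgebra.ad_apply, hL α β i j, map_smul,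
      LinearMap.zero_apply, Module.Basis.coord_apply, Module.Basis.repr_self,
      Finsupp.single_apply, Prod.mk.injEq]
    rw [if_neg (by omega)]; simp
  simpa using LinearMap.congr_fun key x

theorem repr_apply_lie (hL : IsBlockBasis L) (d : LieDerivation F B B) (α : ℤ) (i : ℕ)
    (β : ℤ) (j : ℕ) (p : ℤ × ℕ) :
    (((α - 1) * (j + 1) - (β - 1) * (i + 1) : ℤ) : F) * L.repr (d (L (α + β, i + j))) p =
      L.repr ⁅L (α, i), d (L (β, j))⁆ p - L.repr ⁅L (β, j), d (L (α, i))⁆ p := by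
  have h := congrArg (L.repr · p) (d.apply_lie_eq_add (L (α, i)) (L (β, j)))
  simp only [hL α β i j, map_smul, map_add, Finsupp.smul_apply, Finsupp.add_apply,
    smul_eq_mul] at h
  rw [h, ← lie_skew (d (L (α, i))), map_neg, Finsupp.neg_apply, ← sub_eq_add_neg]

theorem repr_apply_basis_of_lt [CharZero F] (hL : IsBlockBasis L) (d : LieDerivation F B B)
    {j k : ℕ} (hkj : k < j) (γ : ℤ) : L.repr (d (L (γ, j))) (γ, k) = 0 := by
  have rel : ∀ α β : ℤ,
      (((α - 1) * (j + 1) - (β - 1) : ℤ) : F) * L.repr (d (L (α + β, j))) (α + β, k) =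
        (((α - 1) * (k + 1) - (β - 1) : ℤ) : F) * L.repr (d (L (β, j))) (β, k) := by
    intro α β
    have h := hL.repr_apply_lie d α 0 β j (α + β, 0 + k)
    rw [hL.repr_lie_add, hL.repr_lie_of_lt β _ _ (by omega), sub_zero] at h
    simpa using h
  have h2 : L.repr (d (L (2, j))) (2, k) = 0 := by
    have h := rel 0 2
    have hjk : (j : F) ≠ k := Nat.cast_injective.ne hkj.ne'
    push_cast at h
    have h' : ((k : F) - j) * L.repr (d (L (2, j))) (2, k) = 0 := by linear_combination h
    exact (mul_eq_zero.mp h').resolve_left (sub_ne_zero.mpr hjk.symm)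
  have h := rel (γ - 2) 2
  rw [h2, mul_zero, sub_add_cancel] at h
  refine (mul_eq_zero.mp h).resolve_left (Int.cast_ne_zero.mpr ?_)
  -- `(γ - 3) * (j + 1) = 1` is impossible since `j + 1 ≥ 2`
  rcases le_or_gt (γ - 2 - 1) 0 with hγ | hγ <;> nlinarith

theorem repr_apply_basis_self_add [CharZero F] (hL : IsBlockBasis L) (d : LieDerivation F B B)
    (α : ℤ) (i : ℕ) (β : ℤ) (j : ℕ)
    (hne : (α - 1) * ((j : ℤ) + 1) ≠ (β - 1) * ((i : ℤ) + 1)) :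
    L.repr (d (L (α + β, i + j))) (α + β, i + j) =
      L.repr (d (L (α, i))) (α, i) + L.repr (d (L (β, j))) (β, j) := by
  have h := hL.repr_apply_lie d α i β j (α + β, i + j)
  rw [hL.repr_lie_add, add_comm α, add_comm i, hL.repr_lie_add, add_comm β, add_comm j] at h
  refine mul_left_cancel₀ (Int.cast_ne_zero.mpr (sub_ne_zero.mpr hne)) ?_
  rw [h]; push_cast; ring

theorem repr_apply_basis_self [CharZero F] (hL : IsBlockBasis L) (d : LieDerivation F B B)
    (β : ℤ) (j : ℕ) :
    L.repr (d (L (β, j))) (β, j) =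
      β * L.repr (d (L (1, 0))) (1, 0) + j * L.repr (d (L (0, 1))) (0, 1) := by
  simpa only [zsmul_eq_mul, nsmul_eq_mul] using
    eq_zsmul_add_nsmul_of_map_add (f := fun β j ↦ L.repr (d (L (β, j))) (β, j))
      (hL.repr_apply_basis_self_add d) β j

theorem apply_basis_eq_smul [CharZero F] (hL : IsBlockBasis L) (d : LieDerivation F B B)
    {β : ℤ} {j : ℕ} (hdeg : d (L (β, j)) ∈ gradedComponent L β)
    (hfil : d (L (β, j)) ∈ filtrationComponent L j) :
    d (L (β, j)) =
      (β * L.repr (d (L (1, 0))) (1, 0) + j * L.repr (d (L (0, 1))) (0, 1)) • L (β, j) := by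
  apply L.repr.injective
  ext ⟨γ, k⟩
  rw [map_smul, L.repr_self, Finsupp.smul_apply, Finsupp.single_apply, smul_eq_mul]
  rcases eq_or_ne γ β with rfl | hγ
  · rcases lt_trichotomy k j with hk | rfl | hk
    · rw [hL.repr_apply_basis_of_lt d hk, if_neg (by simp [hk.ne']), mul_zero]
    · rw [hL.repr_apply_basis_self, if_pos rfl, mul_one]
    · rw [repr_eq_zero_of_mem_filtrationComponent L hfil γ (by omega), if_neg (by simp [hk.ne]),
        mul_zero]
  · rw [repr_eq_zero_of_mem_gradedComponent L hdeg hγ, if_neg (by simp [hγ.symm]), mul_zero]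

end IsBlockBasis

end BlockBasis

theorem derivation_degree_zero_eq_inner_add_smul_d0_general
    {F : Type*} [Field F] [CharZero F]
    {B : Type*} [LieRing B] [LieAlgebra F B]
    (L : Module.Basis (ℤ × ℕ) F B)
    (hL : ∀ (α β : ℤ) (i j : ℕ),
      ⁅L (α, i), L (β, j)⁆ =
        (((α - 1) * (j + 1) - (β - 1) * (i + 1) : ℤ) : F) • L (α + β, i + j))
    (d₀ : LieDerivation F B B)
    (hd₀ : ∀ (β : ℤ) (j : ℕ), d₀ (L (β, j)) = (β : F) • L (β, j))
    (d : LieDerivation F B B)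
    (hdeg : ∀ β : ℤ, (gradedComponent L β).map d.toLinearMap ≤ gradedComponent L β)
    (hfil : ∀ j : ℕ,
      (filtrationComponent L (j : ℤ)).map d.toLinearMap ≤ filtrationComponent L (j : ℤ)) :
    ∃ (u : B) (lam : F), ∀ x : B, d x = ⁅u, x⁆ + lam • d₀ x := by
  have hL' : IsBlockBasis L := hL
  set A := L.repr (d (L (1, 0))) (1, 0)
  set C := L.repr (d (L (0, 1))) (0, 1)
  have hdiag : ∀ β j, d (L (β, j)) = ((β : F) * A + j * C) • L (β, j) := fun β j ↦
    hL'.apply_basis_eq_smul d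
      (hdeg β (Submodule.mem_map_of_mem (Submodule.subset_span ⟨j, rfl⟩)))
      (hfil j (Submodule.mem_map_of_mem (Submodule.subset_span ⟨β, j, le_rfl, rfl⟩)))
  refine ⟨(-C) • L (0, 0), A - C, fun x ↦ LinearMap.congr_fun
    (?_ : d.toLinearMap = LieAlgebra.ad F B ((-C) • L (0, 0)) + (A - C) • d₀.toLinearMap) x⟩
  refine L.ext fun ⟨β, j⟩ ↦ ?_
  simp only [LinearMap.add_apply, LieAlgebra.ad_apply, LinearMap.smul_apply,
    LieDerivation.coeFn_coe, hdiag, hd₀, smul_lie, hL 0 β 0 j, zero_add]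
  push_cast
  module

/-- Lemma 2.2. Let `d` be a derivation of the Block type Lie algebra `B`
of degree `0` (i.e. `d(B_β) ⊆ B_β` for all `β`) which preserves the filtration
(`d(B^{[j]}) ⊆ B^{[j]}` for all `j ∈ ℕ`).  Then `d = ad u + λ • d₀` for some `u ∈ B` and
`λ ∈ F`, where `d₀` is the derivation determined by `d₀ (L (β,j)) = β • L (β,j)`. -/
theorem derivation_degree_zero_eq_inner_add_smul_d0
    {F : Type*} [Field F] [IsAlgClosed F] [CharZero F]
    {B : Type*} [LieRing B] [LieAlgebra F B]
    (L : Module.Basis (ℤ × ℕ) F B)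
    (hL : ∀ (α β : ℤ) (i j : ℕ),
      ⁅L (α, i), L (β, j)⁆ =
        (((α - 1) * (j + 1) - (β - 1) * (i + 1) : ℤ) : F) • L (α + β, i + j))
    (d₀ : LieDerivation F B B)
    (hd₀ : ∀ (β : ℤ) (j : ℕ), d₀ (L (β, j)) = (β : F) • L (β, j))
    (d : LieDerivation F B B)
    (hdeg : ∀ β : ℤ, (gradedComponent L β).map d.toLinearMap ≤ gradedComponent L β)
    (hfil : ∀ j : ℕ,
      (filtrationComponent L (j : ℤ)).map d.toLinearMap ≤ filtrationComponent L (j : ℤ)) :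
    ∃ (u : B) (lam : F), ∀ x : B, d x = ⁅u, x⁆ + lam • d₀ x :=
  derivation_degree_zero_eq_inner_add_smul_d0_general L hL d₀ hd₀ d hdeg hfil
end

section
/- (Lemma 3.1, first part) An element S ∈ B is ad-locally finite if and only if S is a scalar multiple of L_{0,0}; that is, up to scalars, L_{0,0} is the unique ad-locally finite element of B. -/
/-!
If `S` has a basis component `L t` with `t ≠ 0`, order `ℤ × ℕ` by an additive total order in
which `t > 0`, and let `a` be the largest index in the support of `S`. Since the bracket is
graded, `ad S` sends an element with leading index `b` to one with leading index `a + b`, the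
leading coefficient being multiplied by the structure constant `blockConst a b`. For `b` chosen
so that none of the constants `blockConst a (b + k • a)` vanish, the iterates `(ad S) ^ m (L b)`
have the strictly increasing leading indices `b + m • a`, hence are linearly independent.
Conversely, `ad (L 0)` is diagonal in the basis `L`.
-/

open Module Submodule Set Pointwise

namespace Module.End

variable {R M : Type*} [CommRing R] [AddCommGroup M] [Module R M]

def IsLocallyFinite (f : Module.End R M) : Prop :=
  ∀ v : M, Module.Finite R (span R (range fun m : ℕ => (f ^ m) v))

theorem isLocallyFinite_of_apply_basis [IsNoetherianRing R] {ι : Type*} (f : Module.End R M)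
    (b : Basis ι R M) (μ : ι → R) (h : ∀ i, f (b i) = μ i • b i) : f.IsLocallyFinite := by
  intro v
  let W := span R (b '' (b.repr v).support)
  have hW : W ≤ W.comap f := span_le.2 <| by
    rintro _ ⟨i, hi, rfl⟩
    simpa [h] using W.smul_mem (μ i) (subset_span ⟨i, hi, rfl⟩)
  have horbit (m : ℕ) : (f ^ m) v ∈ W := by
    rw [coe_pow]
    exact (show MapsTo f W W from fun _ hx => hW hx).iterate m (b.mem_span_repr_support v)
  have : Module.Finite R W :=
    Module.Finite.span_of_finite R ((b.repr v).support.finite_toSet.image b)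
  have := isNoetherian_of_le (span_le.2 (range_subset_iff.2 horbit))
  infer_instance

theorem not_isLocallyFinite_of_linearIndependent [StrongRankCondition R] (f : Module.End R M)
    (v : M) (h : LinearIndependent R fun m : ℕ => (f ^ m) v) : ¬f.IsLocallyFinite := fun hf =>
  have := hf v
  Module.Finite.not_linearIndependent_of_infinite _ (linearIndependent_span h)

end Module.End

namespace Module.Basis

section IsLeadingIndex

variable {R M ι G : Type*} [CommRing R] [AddCommGroup M] [Module R M] (L : Basis ι R M)

def IsLeadingIndex [LE G] (ψ : ι → G) (x : M) (a : ι) : Prop :=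
  L.repr x a ≠ 0 ∧ ∀ t ∈ (L.repr x).support, ψ t ≤ ψ a

variable {L}

theorem exists_eq_smul_of_support_subset {x : M} {i : ι} (h : (L.repr x).support ⊆ {i}) :
    ∃ c : R, x = c • L i := by
  obtain ⟨c, hc⟩ := Finsupp.support_subset_singleton'.1 h
  refine ⟨c, ?_⟩
  rw [← L.repr_symm_single, ← hc, L.repr.symm_apply_apply]

theorem isLeadingIndex_self [Nontrivial R] [Preorder G] (ψ : ι → G) (a : ι) :
    L.IsLeadingIndex ψ (L a) a := by
  refine ⟨by simp, fun t ht => ?_⟩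
  rw [L.repr_self] at ht
  rw [Finset.mem_singleton.1 (Finsupp.support_single_subset ht)]

theorem IsLeadingIndex.repr_eq_zero [Preorder G] {ψ : ι → G} {x : M} {a d : ι}
    (hx : L.IsLeadingIndex ψ x a) (h : ψ a < ψ d) : L.repr x d = 0 :=
  Finsupp.notMem_support_iff.1 fun hd => (hx.2 d hd).not_gt h

theorem IsLeadingIndex.eq_of_add_eq [AddCommMonoid ι] [AddCommMonoid G] [PartialOrder G]
    [IsOrderedCancelAddMonoid G] {ψ : ι →+ G} (hψ : Function.Injective ψ) {x y : M} {a b : ι}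
    (hx : L.IsLeadingIndex ψ x a) (hy : L.IsLeadingIndex ψ y b) {t e : ι}
    (ht : t ∈ (L.repr x).support) (he : e ∈ (L.repr y).support) (h : t + e = a + b) :
    t = a ∧ e = b := by
  have := (add_eq_add_iff_eq_and_eq (hx.2 t ht) (hy.2 e he)).1 (by rw [← map_add, h, map_add])
  exact ⟨hψ this.1, hψ this.2⟩

theorem linearIndependent_of_isLeadingIndex [NoZeroDivisors R] [LinearOrder G] {ψ : ι → G}
    {κ : Type*} {w : κ → M} {d : κ → ι} (hw : ∀ k, L.IsLeadingIndex ψ (w k) (d k))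
    (hd : Function.Injective (ψ ∘ d)) : LinearIndependent R w := by
  classical
  rw [linearIndependent_iff']
  intro s g hg
  by_contra! hne
  obtain ⟨i, hi, hgi⟩ := hne
  obtain ⟨m, hm, hmax⟩ :=
    (s.filter (g · ≠ 0)).exists_max_image (ψ ∘ d) ⟨i, Finset.mem_filter.2 ⟨hi, hgi⟩⟩
  rw [Finset.mem_filter] at hm
  have hcoeff := congrArg (fun x => L.repr x (d m)) hg
  simp only [map_sum, map_smul, Finsupp.coe_finsetSum, Finset.sum_apply, Finsupp.smul_apply,
    smul_eq_mul, map_zero, Finsupp.coe_zero, Pi.zero_apply] at hcoeff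
  rw [Finset.sum_eq_single_of_mem m hm.1] at hcoeff
  · exact mul_ne_zero hm.2 (hw m).1 hcoeff
  intro j hj hjm
  by_cases hgj : g j = 0
  · rw [hgj, zero_mul]
  have hlt : ψ (d j) < ψ (d m) :=
    (hmax j (Finset.mem_filter.2 ⟨hj, hgj⟩)).lt_of_ne fun h => hjm (hd h)
  rw [(hw j).repr_eq_zero hlt, mul_zero]

end IsLeadingIndex

section LieBracket

variable {R B ι G : Type*} [CommRing R] [LieRing B] [LieAlgebra R B] [AddCommMonoid ι]
  (L : Basis ι R B) {c : ι → ι → R} (hL : ∀ a b, ⁅L a, L b⁆ = c a b • L (a + b))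
include hL

theorem repr_lie (x y : B) :
    L.repr ⁅x, y⁆ = (L.repr x).sum fun a r =>
      (L.repr y).sum fun b s => Finsupp.single (a + b) (r * s * c a b) := by
  conv_lhs => rw [← L.linearCombination_repr x, ← L.linearCombination_repr y]
  simp only [Finsupp.linearCombination_apply, Finsupp.sum, sum_lie, lie_sum, smul_lie, lie_smul,
    hL, map_sum, map_smul, L.repr_self, Finsupp.smul_single, smul_eq_mul, mul_one,
    Finset.smul_sum]
  rw [Finset.sum_comm]
  exact Finset.sum_congr rfl fun a _ => Finset.sum_congr rfl fun b _ => congrArg _ (by ring)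

theorem support_repr_lie_subset (x y : B) :
    ((L.repr ⁅x, y⁆).support : Set ι) ⊆ (L.repr x).support + (L.repr y).support := by
  intro d hd
  rw [Finset.mem_coe, L.repr_lie hL, Finsupp.mem_support_iff] at hd
  simp only [Finsupp.sum_apply] at hd
  obtain ⟨a, ha, hd⟩ := Finset.exists_ne_zero_of_sum_ne_zero hd
  obtain ⟨b, hb, hd⟩ := Finset.exists_ne_zero_of_sum_ne_zero hd
  exact ⟨a, ha, b, hb, by_contra fun h => hd (Finsupp.single_eq_of_ne (Ne.symm h))⟩

variable [AddCommMonoid G] [LinearOrder G] [IsOrderedCancelAddMonoid G] {ψ : ι →+ G}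
  (hψ : Function.Injective ψ) {L}
include hψ

theorem IsLeadingIndex.repr_lie_add {x y : B} {a b : ι} (hx : L.IsLeadingIndex ψ x a)
    (hy : L.IsLeadingIndex ψ y b) : L.repr ⁅x, y⁆ (a + b) = L.repr x a * L.repr y b * c a b := by
  rw [L.repr_lie hL, Finsupp.sum_apply, Finsupp.sum_eq_single a, Finsupp.sum_apply,
    Finsupp.sum_eq_single b]
  · simp
  · intro e he hne
    refine Finsupp.single_eq_of_ne fun h => hne ?_
    exact (hx.eq_of_add_eq hψ hy (Finsupp.mem_support_iff.2 hx.1) (Finsupp.mem_support_iff.2 he)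
      h.symm).2
  · simp
  · intro t ht hne
    rw [Finsupp.sum_apply]
    refine Finset.sum_eq_zero fun e he => Finsupp.single_eq_of_ne fun h => hne ?_
    exact (hx.eq_of_add_eq hψ hy (Finsupp.mem_support_iff.2 ht) he h.symm).1
  · simp

theorem IsLeadingIndex.lie [NoZeroDivisors R] {x y : B} {a b : ι} (hx : L.IsLeadingIndex ψ x a)
    (hy : L.IsLeadingIndex ψ y b) (hc : c a b ≠ 0) : L.IsLeadingIndex ψ ⁅x, y⁆ (a + b) := by
  refine ⟨?_, fun d hd => ?_⟩
  · rw [hx.repr_lie_add hL hψ hy]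
    exact mul_ne_zero (mul_ne_zero hx.1 hy.1) hc
  obtain ⟨t, ht, e, he, rfl⟩ := support_repr_lie_subset L hL x y hd
  rw [map_add, map_add]
  exact add_le_add (hx.2 t ht) (hy.2 e he)

theorem IsLeadingIndex.ad_pow [NoZeroDivisors R] {x y : B} {a b : ι}
    (hx : L.IsLeadingIndex ψ x a) (hy : L.IsLeadingIndex ψ y b)
    (hc : ∀ k : ℕ, c a (b + k • a) ≠ 0) (m : ℕ) :
    L.IsLeadingIndex ψ ((LieAlgebra.ad R B x ^ m) y) (b + m • a) := by
  induction m with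
  | zero => simpa using hy
  | succ m ih =>
    rw [pow_succ', Module.End.mul_apply, LieAlgebra.ad_apply, succ_nsmul', add_left_comm]
    exact hx.lie hL hψ ih (hc m)

theorem IsLeadingIndex.not_isLocallyFinite_ad [IsDomain R] {x : B} {a b : ι}
    (hx : L.IsLeadingIndex ψ x a) (ha : 0 < ψ a) (hc : ∀ k : ℕ, c a (b + k • a) ≠ 0) :
    ¬(LieAlgebra.ad R B x).IsLocallyFinite := by
  refine Module.End.not_isLocallyFinite_of_linearIndependent _ (L b) ?_
  refine linearIndependent_of_isLeadingIndex
    (fun m => hx.ad_pow hL hψ (isLeadingIndex_self ψ b) hc m) fun m n h => ?_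
  exact (nsmul_left_strictMono ha).injective (by simpa using h)

end LieBracket

end Module.Basis

def blockConst (a b : ℤ × ℕ) : ℤ := (a.1 - 1) * (b.2 + 1) - (b.1 - 1) * (a.2 + 1)

theorem exists_blockConst_ne_zero (a : ℤ × ℕ) :
    ∃ b : ℤ × ℕ, ∀ k : ℕ, blockConst a (b + k • a) ≠ 0 := by
  have key (β : ℤ) (k : ℕ) :
      blockConst a ((β, 0) + k • a) = (1 - k) * (a.1 + a.2) - β * (a.2 + 1) := by
    simp only [blockConst, Prod.fst_add, Prod.snd_add, Prod.smul_fst, Prod.smul_snd]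
    push_cast [nsmul_eq_mul]
    ring
  have hk (k : ℕ) : (0 : ℤ) ≤ k := k.cast_nonneg
  have hp : (0 : ℤ) ≤ a.2 := a.2.cast_nonneg
  rcases le_or_gt 0 (a.1 + a.2) with hs | hs
  · refine ⟨(a.1 + a.2 + 1, 0), fun k => ?_⟩
    rw [key]
    nlinarith [mul_nonneg (hk k) hs, mul_nonneg hs hp]
  · refine ⟨(a.1 + a.2 - 1, 0), fun k => ?_⟩
    rw [key]
    nlinarith [mul_nonneg (hk k) (neg_nonneg.2 hs.le), mul_nonneg (neg_nonneg.2 hs.le) hp]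

theorem exists_injective_addMonoidHom_lex_pos {t : ℤ × ℕ} (ht : t ≠ 0) :
    ∃ ψ : ℤ × ℕ →+ ℤ ×ₗ ℤ, Function.Injective ψ ∧ 0 < ψ t := by
  let ψ₀ : ℤ × ℕ →+ ℤ ×ₗ ℤ :=
    { toFun := fun a => toLex (a.1, (a.2 : ℤ))
      map_zero' := rfl
      map_add' := fun a b => by simp [← toLex_add] }
  have hψ₀ : Function.Injective ψ₀ := fun a b h => by
    change toLex (a.1, (a.2 : ℤ)) = toLex (b.1, (b.2 : ℤ)) at h
    simp only [toLex_inj, Prod.mk.injEq, Nat.cast_inj] at h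
    exact Prod.ext h.1 h.2
  rcases (map_zero ψ₀ ▸ hψ₀.ne ht : ψ₀ t ≠ 0).lt_or_gt with h | h
  · exact ⟨-ψ₀, neg_injective.comp hψ₀, by simpa using h⟩
  · exact ⟨ψ₀, hψ₀, h⟩

theorem adLocallyFinite_iff_smul_L00_general
    {F : Type*} [Field F] [CharZero F]
    {B : Type*} [LieRing B] [LieAlgebra F B]
    (L : Module.Basis (ℤ × ℕ) F B)
    (hL : ∀ (α β : ℤ) (i j : ℕ),
      ⁅L (α, i), L (β, j)⁆ =
        (((α - 1) * (j + 1) - (β - 1) * (i + 1) : ℤ) : F) • L (α + β, i + j))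
    (S : B) :
    (∀ v : B, FiniteDimensional F
        (Submodule.span F (Set.range fun m : ℕ => ((LieAlgebra.ad F B S) ^ m) v))) ↔
      ∃ c : F, S = c • L (0, 0) := by
  have hL' (a b : ℤ × ℕ) : ⁅L a, L b⁆ = (blockConst a b : F) • L (a + b) := hL a.1 b.1 a.2 b.2
  change (LieAlgebra.ad F B S).IsLocallyFinite ↔ _
  constructor
  · intro hS
    by_contra hne
    obtain ⟨t, ht, ht0⟩ : ∃ t ∈ (L.repr S).support, t ≠ 0 := by
      by_contra! h
      exact hne (L.exists_eq_smul_of_support_subset fun t ht => Finset.mem_singleton.2 (h t ht))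
    obtain ⟨ψ, hψ, hψt⟩ := exists_injective_addMonoidHom_lex_pos ht0
    obtain ⟨a, ha, hmax⟩ := (L.repr S).support.exists_max_image ψ ⟨t, ht⟩
    obtain ⟨b, hb⟩ := exists_blockConst_ne_zero a
    have hlead : L.IsLeadingIndex ψ S a := ⟨Finsupp.mem_support_iff.1 ha, hmax⟩
    exact hlead.not_isLocallyFinite_ad hL' hψ (hψt.trans_le (hmax t ht))
      (fun k => Int.cast_ne_zero.2 (hb k)) hS
  · rintro ⟨c, rfl⟩
    refine (LieAlgebra.ad F B _).isLocallyFinite_of_apply_basis L (fun e => c * blockConst 0 e)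
      fun e => ?_
    rw [LieAlgebra.ad_apply, smul_lie, hL', Prod.mk_zero_zero, zero_add, smul_smul]

/-- Lemma 3.1, first part. An element `S` of the Block type Lie algebra `B`
is ad-locally finite (for every `v ∈ B` the span of `{(ad S)^m v : m ∈ ℕ}` is finite
dimensional) if and only if `S` is a scalar multiple of `L (0,0)`. -/
theorem adLocallyFinite_iff_smul_L00
    {F : Type*} [Field F] [IsAlgClosed F] [CharZero F]
    {B : Type*} [LieRing B] [LieAlgebra F B]
    (L : Module.Basis (ℤ × ℕ) F B)
    (hL : ∀ (α β : ℤ) (i j : ℕ),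
      ⁅L (α, i), L (β, j)⁆ =
        (((α - 1) * (j + 1) - (β - 1) * (i + 1) : ℤ) : F) • L (α + β, i + j))
    (S : B) :
    (∀ v : B, FiniteDimensional F
        (Submodule.span F (Set.range fun m : ℕ => ((LieAlgebra.ad F B S) ^ m) v))) ↔
      ∃ c : F, S = c • L (0, 0) :=
  adLocallyFinite_iff_smul_L00_general L hL S
end

section
/- (Proposition 3.1(3)) Every Lie algebra automorphism τ of Vir has the form τ(L_α) = s·μ^α·L_{sα} for all α ∈ ℤ, for some uniquely determined μ ∈ F* and s ∈ {1, −1}; consequently Aut(Vir) ≅ F* ⋊ ℤ/2ℤ, where the nontrivial element of ℤ/2ℤ acts on F* by μ ↦ μ^{−1}. -/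
/-- The automorphism group of a Lie algebra, realized as the subgroup of linear
automorphisms preserving the Lie bracket. -/
def lieAutGroup (F B : Type*) [Field F] [LieRing B] [LieAlgebra F B] :
    Subgroup (B ≃ₗ[F] B) where
  carrier := {e | ∀ x y : B, e ⁅x, y⁆ = ⁅e x, e y⁆}
  one_mem' := fun _ _ => rfl
  mul_mem' := fun {a b} ha hb x y => by
    show a (b ⁅x, y⁆) = ⁅a (b x), a (b y)⁆
    rw [hb, ha]
  inv_mem' := fun {a} ha x y => by
    show a.symm ⁅x, y⁆ = ⁅a.symm x, a.symm y⁆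
    apply a.injective
    rw [ha, a.apply_symm_apply, a.apply_symm_apply, a.apply_symm_apply]

/-- Inversion as an automorphism of the commutative group `Fˣ`. -/
def unitsInvAut (F : Type*) [Field F] : MulAut Fˣ := MulEquiv.inv Fˣ

lemma unitsInvAut_sq (F : Type*) [Field F] : (unitsInvAut F) ^ 2 = 1 := by
  ext u
  simp [unitsInvAut, sq]

/-- The action of `ℤ/2ℤ` on `F*` in which the nontrivial element acts by `μ ↦ μ⁻¹`. -/
def invAction (F : Type*) [Field F] : Multiplicative (ZMod 2) →* MulAut Fˣ where
  toFun z := (unitsInvAut F) ^ (z.toAdd.val)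
  map_one' := by simp
  map_mul' x y := by
    show (unitsInvAut F) ^ ((x.toAdd + y.toAdd).val) = _
    rw [ZMod.val_add, ← pow_eq_pow_mod _ (unitsInvAut_sq F), pow_add]

/-!
The adjoint action of `x = τ L₀` is diagonalizable, with the eigenvectors `τ L_α` spanning `V`.
Comparing leading terms in `⁅x, w⁆ = a w` shows that such an `x` has no component of positive
degree: otherwise every eigenvector would have the same top degree as `x`, and they could not
span. Applied to the reflected basis `α ↦ -L(-α)` this also rules out negative degrees, so
`τ L₀ = c L₀`. Eigenvectors of `ad L₀` are multiples of basis vectors, hence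
`τ L_α = d_α L_{sα}` with `s = c⁻¹ ∈ ℤ`, and surjectivity of `τ` forces `s = ±1`. The bracket
relations make `α ↦ s d_α` multiplicative on pairs `α ≠ β`, which pins it down as `α ↦ μ^α`.
Conversely, the scalings `L_α ↦ μ^α L_α` and the flip `L_α ↦ -L_{-α}` are automorphisms, and
conjugating a scaling by the flip inverts `μ`.
-/

open Module

theorem Module.Basis.smul_eq_smul_iff {ι R M : Type*} [Semiring R] [AddCommMonoid M]
    [Module R M] (b : Basis ι R M) {a c : R} {i j : ι} (ha : a ≠ 0) :
    a • b i = c • b j ↔ i = j ∧ a = c := by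
  rw [← b.repr.injective.eq_iff]
  simp [Finsupp.single_eq_single_iff, ha]

theorem Finsupp.exists_ge_apply_ne_zero_forall_gt {α M : Type*} [LinearOrder α] [Zero M]
    (f : α →₀ M) {k : α} (hk : f k ≠ 0) : ∃ N, k ≤ N ∧ f N ≠ 0 ∧ ∀ j, N < j → f j = 0 := by
  have hk' : k ∈ f.support := mem_support_iff.2 hk
  refine ⟨f.support.max' ⟨k, hk'⟩, f.support.le_max' k hk',
    mem_support_iff.1 (f.support.max'_mem _), fun j hj => ?_⟩
  by_contra h
  exact hj.not_ge (f.support.le_max' j (mem_support_iff.2 h))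

theorem eq_zpow_of_map_add_of_ne {G : Type*} [CommGroupWithZero G] {f : ℤ → G} (h1 : f 1 ≠ 0)
    (hf : ∀ a b, a ≠ b → f (a + b) = f a * f b) (n : ℤ) : f n = f 1 ^ n := by
  have h0 : f 0 = 1 := by simpa [h1] using hf 0 1 (by norm_num)
  have hneg : f (-1) = (f 1)⁻¹ :=
    eq_inv_of_mul_eq_one_left (by simpa [h0] using (hf (-1) 1 (by norm_num)).symm)
  -- the only instance of `f (m + 1) = f m * f 1` not covered by `hf` is `m = 1`
  have hsucc (m : ℤ) : f (m + 1) = f m * f 1 := by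
    rcases eq_or_ne m 1 with rfl | hm
    · have h21 := hf 2 (-1) (by norm_num)
      rw [hneg, show (2 : ℤ) + -1 = 1 by norm_num, eq_mul_inv_iff_mul_eq₀ h1] at h21
      simpa using h21.symm
    · exact hf m 1 hm
  induction n using Int.induction_on with
  | zero => simpa using h0
  | succ m ih => rw [hsucc, ih, zpow_add_one₀ h1]
  | pred m ih => rw [zpow_sub_one₀ h1, ← ih, eq_mul_inv_iff_mul_eq₀ h1, ← hsucc, sub_add_cancel]

theorem isUnit_of_forall_map_basis_eq_smul {F V : Type*} [Field F] [AddCommGroup V] [Module F V]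
    (L : Basis ℤ F V) (τ : V ≃ₗ[F] V) {s : ℤ} (h : ∀ α, ∃ d : F, τ (L α) = d • L (s * α)) :
    IsUnit s := by
  by_contra hs
  have hzero : L.coord 1 ∘ₗ τ.toLinearMap = 0 := L.ext fun α => by
    obtain ⟨d, hd⟩ := h α
    have : s * α ≠ 1 := fun h1 => hs (IsUnit.of_mul_eq_one α h1)
    simp [hd, this]
  simpa using LinearMap.congr_fun hzero (τ.symm (L 1))

theorem Multiplicative.zmod_two_cases (z : Multiplicative (ZMod 2)) :
    z = 1 ∨ z = Multiplicative.ofAdd 1 := by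
  fin_cases z
  exacts [Or.inl rfl, Or.inr rfl]

theorem mem_lieAutGroup_of_basis {F V ι : Type*} [Field F] [LieRing V] [LieAlgebra F V]
    (b : Basis ι F V) (e : V ≃ₗ[F] V) (h : ∀ i j, e ⁅b i, b j⁆ = ⁅e (b i), e (b j)⁆) :
    e ∈ lieAutGroup F V := by
  let bracket : V →ₗ[F] V →ₗ[F] V := LinearMap.mk₂ F (⁅·, ·⁆) add_lie smul_lie lie_add lie_smul
  have : bracket.compr₂ (e : V →ₗ[F] V) = bracket.compl₁₂ (e : V →ₗ[F] V) (e : V →ₗ[F] V) :=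
    LinearMap.ext_basis b b h
  exact fun x y => LinearMap.congr_fun₂ this x y

namespace Witt

variable {F V : Type*} [Field F] [LieRing V] [LieAlgebra F V]

def IsWittBasis (L : Basis ℤ F V) : Prop :=
  ∀ α β : ℤ, ⁅L α, L β⁆ = ((β - α : ℤ) : F) • L (α + β)

noncomputable def reflect (L : Basis ℤ F V) : Basis ℤ F V :=
  (L.map (LinearEquiv.neg F)).reindex (Equiv.neg ℤ)

variable {L : Basis ℤ F V}

theorem reflect_apply (α : ℤ) : reflect L α = -L (-α) := by
  simp [reflect]

theorem reflect_repr_apply (x : V) (k : ℤ) : (reflect L).repr x k = -L.repr x (-k) := by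
  rw [reflect, Basis.repr_reindex_apply, Basis.map_repr]
  simp

theorem IsWittBasis.reflect (hL : IsWittBasis L) : IsWittBasis (reflect L) := by
  intro α β
  simp only [reflect_apply, neg_lie, lie_neg, neg_neg, smul_neg]
  rw [hL, neg_add, ← neg_smul]
  congr 1
  push_cast
  ring

theorem IsWittBasis.unitsSMul_zpow (hL : IsWittBasis L) (u : Fˣ) :
    IsWittBasis (L.unitsSMul fun α => u ^ α) := by
  intro α β
  simp only [Basis.unitsSMul_apply, Units.smul_def, smul_lie, lie_smul, hL α β, smul_smul,
    zpow_add, Units.val_mul]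
  ring_nf

theorem IsWittBasis.equiv_mem (hL : IsWittBasis L) {L' : Basis ℤ F V} (hL' : IsWittBasis L') :
    L.equiv L' (Equiv.refl ℤ) ∈ lieAutGroup F V :=
  mem_lieAutGroup_of_basis L _ fun α β => by simp [hL α β, hL' α β]

namespace IsWittBasis

theorem repr_lie_basis (hL : IsWittBasis L) (β : ℤ) (w : V) (k : ℤ) :
    L.repr ⁅L β, w⁆ k = ((k - 2 * β : ℤ) : F) * L.repr w (k - β) := by
  have : Finsupp.lapply k ∘ₗ L.repr.toLinearMap ∘ₗ LieAlgebra.ad F V (L β)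
      = ((k - 2 * β : ℤ) : F) • (Finsupp.lapply (k - β) ∘ₗ L.repr.toLinearMap) := by
    refine L.ext fun γ => ?_
    rcases eq_or_ne (β + γ) k with rfl | h
    · simp [hL β γ]
      ring
    · simp [hL β γ, h, show γ ≠ k - β by omega]
  simpa using LinearMap.congr_fun this w

theorem repr_lie (hL : IsWittBasis L) (x w : V) (k : ℤ) :
    L.repr ⁅x, w⁆ k
      = ∑ β ∈ (L.repr x).support, L.repr x β * (((k - 2 * β : ℤ) : F) * L.repr w (k - β)) := by
  conv_lhs =>
    rw [← L.linearCombination_repr x, Finsupp.linearCombination_apply, Finsupp.sum, sum_lie]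
  simp [smul_lie, hL.repr_lie_basis]

theorem repr_lie_add_of_forall_gt (hL : IsWittBasis L) {x w : V} {N n : ℤ}
    (hx : ∀ k, N < k → L.repr x k = 0) (hw : ∀ k, n < k → L.repr w k = 0) :
    L.repr ⁅x, w⁆ (N + n) = ((n - N : ℤ) : F) * L.repr x N * L.repr w n := by
  rw [hL.repr_lie, Finset.sum_eq_single N]
  · rw [show N + n - 2 * N = n - N by ring, add_sub_cancel_left]
    ring
  · intro β hβ hβN
    have : β < N :=
      lt_of_le_of_ne (not_lt.1 fun h => Finsupp.mem_support_iff.1 hβ (hx β h)) hβN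
    rw [hw _ (by omega), mul_zero, mul_zero]
  · intro hN
    rw [Finsupp.notMem_support_iff.1 hN, zero_mul]

theorem iSup_eigenspace_ad_map_eq_top (hL : IsWittBasis L) {τ : V ≃ₗ[F] V}
    (hτ : τ ∈ lieAutGroup F V) : ⨆ a, (LieAlgebra.ad F V (τ (L 0))).eigenspace a = ⊤ := by
  refine eq_top_iff.2 ?_
  rw [← (L.map τ).span_eq, Submodule.span_le]
  rintro _ ⟨α, rfl⟩
  refine Submodule.mem_iSup_of_mem (α : F) (Module.End.mem_eigenspace_iff.2 ?_)
  rw [L.map_apply, LieAlgebra.ad_apply, ← hτ, hL 0 α, map_smul]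
  simp

section CharZero

variable [CharZero F]

theorem repr_eq_zero_of_mem_eigenspace (hL : IsWittBasis L) {x w : V} {a : F} {N : ℤ}
    (hN : 0 < N) (hxN : L.repr x N ≠ 0) (hx : ∀ k, N < k → L.repr x k = 0)
    (hw : w ∈ (LieAlgebra.ad F V x).eigenspace a) {k : ℤ} (hk : N < k) : L.repr w k = 0 := by
  by_contra hwk
  obtain ⟨n, hkn, hwn, hw_gt⟩ := (L.repr w).exists_ge_apply_ne_zero_forall_gt hwk
  have hbracket : L.repr ⁅x, w⁆ (N + n) = 0 := by
    rw [← LieAlgebra.ad_apply F, Module.End.mem_eigenspace_iff.1 hw, map_smul,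
      Finsupp.smul_apply, hw_gt _ (by omega), smul_zero]
  rw [hL.repr_lie_add_of_forall_gt hx hw_gt] at hbracket
  have hnN : ((n - N : ℤ) : F) ≠ 0 := Int.cast_ne_zero.2 (by omega)
  exact mul_ne_zero (mul_ne_zero hnN hxN) hwn hbracket

theorem repr_eq_zero_of_pos (hL : IsWittBasis L) {x : V}
    (hx : ⨆ a, (LieAlgebra.ad F V x).eigenspace a = ⊤) {k : ℤ} (hk : 0 < k) :
    L.repr x k = 0 := by
  by_contra hxk
  obtain ⟨N, hkN, hxN, hx_gt⟩ := (L.repr x).exists_ge_apply_ne_zero_forall_gt hxk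
  have : ⊤ ≤ LinearMap.ker (L.coord (N + 1)) :=
    hx ▸ iSup_le fun _ _ hw =>
      hL.repr_eq_zero_of_mem_eigenspace (by omega) hxN hx_gt hw (lt_add_one N)
  simpa using this (Submodule.mem_top (x := L (N + 1)))

theorem repr_eq_zero_of_neg (hL : IsWittBasis L) {x : V}
    (hx : ⨆ a, (LieAlgebra.ad F V x).eigenspace a = ⊤) {k : ℤ} (hk : k < 0) :
    L.repr x k = 0 := by
  simpa [reflect_repr_apply] using hL.reflect.repr_eq_zero_of_pos hx (neg_pos.2 hk)

theorem eq_smul_basis_zero (hL : IsWittBasis L) {x : V}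
    (hx : ⨆ a, (LieAlgebra.ad F V x).eigenspace a = ⊤) : x = L.repr x 0 • L 0 := by
  refine L.ext_elem_iff.2 fun k => ?_
  rcases lt_trichotomy k 0 with hk | rfl | hk
  · simp [hL.repr_eq_zero_of_neg hx hk, hk.ne]
  · simp
  · simp [hL.repr_eq_zero_of_pos hx hk, hk.ne']

theorem exists_eq_smul_of_lie_eq_smul (hL : IsWittBasis L) {w : V} (hw : w ≠ 0) {a : F}
    (h : ⁅L 0, w⁆ = a • w) : ∃ γ : ℤ, a = γ ∧ w = L.repr w γ • L γ := by
  have key (k : ℤ) : (a - k) * L.repr w k = 0 := by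
    simpa [h, sub_eq_zero] using hL.repr_lie_basis 0 w k
  obtain ⟨γ, hγ⟩ : ∃ γ, L.repr w γ ≠ 0 := by
    by_contra! h0
    exact hw (L.ext_elem_iff.2 fun k => by simp [h0])
  have ha : a = γ := sub_eq_zero.1 ((mul_eq_zero.1 (key γ)).resolve_right hγ)
  refine ⟨γ, ha, L.ext_elem_iff.2 fun k => ?_⟩
  rcases eq_or_ne γ k with rfl | hk
  · simp
  · have : a - k ≠ 0 := by rw [ha, sub_ne_zero]; exact Int.cast_injective.ne hk
    simp [(mul_eq_zero.1 (key k)).resolve_left this, hk]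

theorem exists_forall_map_basis_eq_smul (hL : IsWittBasis L) {τ : V ≃ₗ[F] V}
    (hτ : τ ∈ lieAutGroup F V) : ∃ s : ℤ, ∀ α, ∃ d : F, τ (L α) = d • L (s * α) := by
  set c := L.repr (τ (L 0)) 0
  have hc : τ (L 0) = c • L 0 := hL.eq_smul_basis_zero (hL.iSup_eigenspace_ad_map_eq_top hτ)
  have hc0 : c ≠ 0 := by
    intro h
    rw [h, zero_smul, LinearEquiv.map_eq_zero_iff] at hc
    exact L.ne_zero 0 hc
  have hL0 : L 0 = c⁻¹ • τ (L 0) := by rw [hc, smul_smul, inv_mul_cancel₀ hc0, one_smul]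
  have heig (α : ℤ) : ∃ γ : ℤ, c⁻¹ * α = γ ∧ τ (L α) = L.repr (τ (L α)) γ • L γ := by
    refine hL.exists_eq_smul_of_lie_eq_smul (by simpa using L.ne_zero α) ?_
    rw [hL0, smul_lie, ← hτ, hL 0 α, map_smul, smul_smul]
    simp
  choose γ hγ hτγ using heig
  refine ⟨γ 1, fun α => ⟨L.repr (τ (L α)) (γ α), ?_⟩⟩
  have hγα : γ α = γ 1 * α :=
    Int.cast_injective (α := F) (by rw [← hγ, Int.cast_mul, ← hγ]; simp)
  rw [← hγα]
  exact hτγ α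

theorem coeff_add_of_ne (hL : IsWittBasis L) {τ : V ≃ₗ[F] V} (hτ : τ ∈ lieAutGroup F V)
    {s : ℤ} {d : ℤ → F} (hd : ∀ α, τ (L α) = d α • L (s * α)) {α β : ℤ} (hαβ : α ≠ β) :
    d (α + β) = s * d α * d β := by
  have h := hτ (L α) (L β)
  rw [hL, map_smul, hd, hd, hd, smul_lie, lie_smul, hL, smul_smul, smul_smul, smul_smul,
    ← mul_add] at h
  have hβα : ((β - α : ℤ) : F) ≠ 0 := Int.cast_ne_zero.2 (sub_ne_zero.2 hαβ.symm)
  apply mul_left_cancel₀ hβα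
  rw [smul_left_injective F (L.ne_zero _) h]
  push_cast
  ring

theorem exists_forall_map_basis_eq (hL : IsWittBasis L) {τ : V ≃ₗ[F] V}
    (hτ : τ ∈ lieAutGroup F V) : ∃ μ : F, ∃ s : ℤ, μ ≠ 0 ∧ (s = 1 ∨ s = -1) ∧
      ∀ α : ℤ, τ (L α) = ((s : F) * μ ^ α) • L (s * α) := by
  obtain ⟨s, h⟩ := hL.exists_forall_map_basis_eq_smul hτ
  have hs : s = 1 ∨ s = -1 := Int.isUnit_iff.1 (isUnit_of_forall_map_basis_eq_smul L τ h)
  have hss : (s : F) * s = 1 := by rcases hs with rfl | rfl <;> norm_num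
  choose d hd using h
  have hd1 : d 1 ≠ 0 := by
    intro h0
    have h1 := hd 1
    rw [h0, zero_smul, LinearEquiv.map_eq_zero_iff] at h1
    exact L.ne_zero 1 h1
  have hμ : (s : F) * d 1 ≠ 0 := mul_ne_zero (left_ne_zero_of_mul_eq_one hss) hd1
  have hpow := eq_zpow_of_map_add_of_ne (f := fun α => (s : F) * d α) hμ fun α β hαβ => by
    simp only [hL.coeff_add_of_ne hτ hd hαβ]
    ring
  refine ⟨s * d 1, s, hμ, hs, fun α => ?_⟩
  rw [hd α, ← hpow α]
  congr 1
  linear_combination (-d α) * hss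

end CharZero

end IsWittBasis

theorem eq_of_forall_smul_basis_eq {μ ν : F} {s t : ℤ} (hμ : μ ≠ 0) (hs : (s : F) ≠ 0)
    (h : ∀ α : ℤ, ((s : F) * μ ^ α) • L (s * α) = ((t : F) * ν ^ α) • L (t * α)) :
    μ = ν ∧ s = t := by
  have h1 := h 1
  simp only [zpow_one, mul_one] at h1
  obtain ⟨rfl, hμν⟩ := (L.smul_eq_smul_iff (mul_ne_zero hs hμ)).1 h1
  exact ⟨mul_left_cancel₀ hs hμν, rfl⟩

noncomputable def scaling (L : Basis ℤ F V) (u : Fˣ) : V ≃ₗ[F] V :=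
  L.equiv (L.unitsSMul fun α => u ^ α) (Equiv.refl ℤ)

@[simp]
theorem scaling_apply (u : Fˣ) (α : ℤ) : scaling L u (L α) = ((u : F) ^ α) • L α := by
  simp [scaling, Basis.unitsSMul_apply, Units.smul_def]

noncomputable def flip (L : Basis ℤ F V) : V ≃ₗ[F] V :=
  L.equiv (reflect L) (Equiv.refl ℤ)

@[simp]
theorem flip_apply (α : ℤ) : flip L (L α) = -L (-α) := by
  simp [flip, reflect_apply]

noncomputable def scalingHom (hL : IsWittBasis L) : Fˣ →* lieAutGroup F V where
  toFun u := ⟨scaling L u, hL.equiv_mem (hL.unitsSMul_zpow u)⟩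
  map_one' := Subtype.ext <| L.ext' fun α => by simp
  map_mul' u v := Subtype.ext <| L.ext' fun α => by simp [smul_smul, mul_zpow, mul_comm]

@[simp]
theorem coe_scalingHom (hL : IsWittBasis L) (u : Fˣ) :
    (scalingHom hL u : V ≃ₗ[F] V) = scaling L u :=
  rfl

noncomputable def flipAut (hL : IsWittBasis L) : lieAutGroup F V :=
  ⟨flip L, hL.equiv_mem hL.reflect⟩

@[simp]
theorem coe_flipAut (hL : IsWittBasis L) : (flipAut hL : V ≃ₗ[F] V) = flip L :=
  rfl

theorem flipAut_sq (hL : IsWittBasis L) : flipAut hL ^ 2 = 1 :=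
  Subtype.ext <| L.ext' fun α => by simp [sq]

noncomputable def flipHom (hL : IsWittBasis L) : Multiplicative (ZMod 2) →* lieAutGroup F V where
  toFun z := flipAut hL ^ z.toAdd.val
  map_one' := by simp
  map_mul' x y := by
    show flipAut hL ^ (x.toAdd + y.toAdd).val = _
    rw [ZMod.val_add, ← pow_eq_pow_mod _ (flipAut_sq hL), pow_add]

theorem flipHom_ofAdd_one (hL : IsWittBasis L) :
    flipHom hL (Multiplicative.ofAdd 1) = flipAut hL :=
  pow_one _

theorem scalingHom_inv (hL : IsWittBasis L) (u : Fˣ) :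
    scalingHom hL u⁻¹ = flipAut hL * scalingHom hL u * (flipAut hL)⁻¹ := by
  rw [eq_mul_inv_iff_mul_eq]
  exact Subtype.ext <| L.ext' fun α => by simp [scalingHom, flipAut]

noncomputable def autHom (hL : IsWittBasis L) :
    (Fˣ ⋊[invAction F] Multiplicative (ZMod 2)) →* lieAutGroup F V :=
  SemidirectProduct.lift (scalingHom hL) (flipHom hL) fun z => by
    ext u : 1
    rcases Multiplicative.zmod_two_cases z with rfl | rfl
    · simp
    · have hinv : invAction F (Multiplicative.ofAdd 1) u = u⁻¹ := rfl
      simp [flipHom_ofAdd_one, hinv, scalingHom_inv]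

@[simp]
theorem autHom_inl (hL : IsWittBasis L) (u : Fˣ) :
    autHom hL (SemidirectProduct.inl u) = scalingHom hL u :=
  SemidirectProduct.lift_inl ..

@[simp]
theorem autHom_inr (hL : IsWittBasis L) (z : Multiplicative (ZMod 2)) :
    autHom hL (SemidirectProduct.inr z) = flipHom hL z :=
  SemidirectProduct.lift_inr ..

theorem autHom_injective (hL : IsWittBasis L) : Function.Injective (autHom hL) := by
  rw [injective_iff_map_eq_one]
  rintro ⟨u, z⟩ h
  have h1 := congr_arg (fun τ : lieAutGroup F V => (τ : V ≃ₗ[F] V) (L 1)) h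
  rcases Multiplicative.zmod_two_cases z with rfl | rfl
  · simp at h1
    have hu := ((L.smul_eq_smul_iff u.ne_zero).1 (h1.trans (one_smul F _).symm)).2
    rw [Units.val_eq_one.1 hu]
    rfl
  · simp [flipHom_ofAdd_one, ← neg_smul] at h1
    have := (L.smul_eq_smul_iff (by simp)).1 (h1.trans (one_smul F _).symm)
    exact absurd this.1 (by norm_num)

theorem autHom_surjective [CharZero F] (hL : IsWittBasis L) :
    Function.Surjective (autHom hL) := by
  rintro ⟨τ, hτ⟩
  obtain ⟨μ, s, hμ, rfl | rfl, hτL⟩ := hL.exists_forall_map_basis_eq hτ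
  · refine ⟨⟨Units.mk0 μ hμ, 1⟩, Subtype.ext <| L.ext' fun α => ?_⟩
    simp [hτL]
  · refine ⟨⟨Units.mk0 μ⁻¹ (inv_ne_zero hμ), Multiplicative.ofAdd 1⟩,
      Subtype.ext <| L.ext' fun α => ?_⟩
    simp [flipHom_ofAdd_one, hτL]

end Witt

theorem aut_virasoro_classification_general
    {F : Type*} [Field F] [CharZero F]
    {V : Type*} [LieRing V] [LieAlgebra F V]
    (L : Module.Basis ℤ F V)
    (hL : ∀ α β : ℤ, ⁅L α, L β⁆ = ((β - α : ℤ) : F) • L (α + β)) :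
    (∀ τ : V ≃ₗ[F] V, τ ∈ lieAutGroup F V →
      ∃! p : F × ℤ, (p.1 ≠ 0 ∧ (p.2 = 1 ∨ p.2 = -1)) ∧
        ∀ α : ℤ, τ (L α) = ((p.2 : F) * p.1 ^ α) • L (p.2 * α)) ∧
      Nonempty ((Fˣ ⋊[invAction F] Multiplicative (ZMod 2)) ≃* lieAutGroup F V) := by
  have hL : Witt.IsWittBasis L := hL
  refine ⟨fun τ hτ => ?_,
    ⟨.ofBijective _ ⟨Witt.autHom_injective hL, Witt.autHom_surjective hL⟩⟩⟩
  obtain ⟨μ, s, hμ, hs, hτL⟩ := hL.exists_forall_map_basis_eq hτ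
  refine ⟨(μ, s), ⟨⟨hμ, hs⟩, hτL⟩, fun ⟨ν, t⟩ ⟨_, hτL'⟩ => ?_⟩
  have hsF : (s : F) ≠ 0 := by rcases hs with rfl | rfl <;> norm_num
  obtain ⟨rfl, rfl⟩ :=
    Witt.eq_of_forall_smul_basis_eq hμ hsF fun α => (hτL α).symm.trans (hτL' α)
  rfl

/-- Proposition 3.1(3). Every Lie algebra automorphism `τ` of the
centerless Virasoro algebra `Vir` has the form `τ (L α) = s • μ^α • L (s·α)` for a uniquely
determined pair `(μ, s)` with `μ ∈ F*` and `s ∈ {1, −1}`; consequently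
`Aut(Vir) ≅ F* ⋊ ℤ/2ℤ`, the nontrivial element of `ℤ/2ℤ` acting on `F*` by `μ ↦ μ⁻¹`. -/
theorem aut_virasoro_classification
    {F : Type*} [Field F] [IsAlgClosed F] [CharZero F]
    {V : Type*} [LieRing V] [LieAlgebra F V]
    (L : Module.Basis ℤ F V)
    (hL : ∀ α β : ℤ, ⁅L α, L β⁆ = ((β - α : ℤ) : F) • L (α + β)) :
    (∀ τ : V ≃ₗ[F] V, τ ∈ lieAutGroup F V →
      ∃! p : F × ℤ, (p.1 ≠ 0 ∧ (p.2 = 1 ∨ p.2 = -1)) ∧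
        ∀ α : ℤ, τ (L α) = ((p.2 : F) * p.1 ^ α) • L (p.2 * α)) ∧
      Nonempty ((Fˣ ⋊[invAction F] Multiplicative (ZMod 2)) ≃* lieAutGroup F V) :=
  aut_virasoro_classification_general L hL
end

section
/- For each ξ ∈ {1, −1}, the linear map ρ_ξ : B → B determined by ρ_ξ(L_{α,i}) = ξ·L_{ξ(α+i)−i, i} is a Lie algebra automorphism of B; ρ_1 is the identity, ρ_{−1} is an involution, and {ρ_ξ : ξ = ±1} is a subgroup of Aut(B) isomorphic to ℤ/2ℤ. -/
/-!
A shift `α ↦ ξ(α+i) - i` of the first index multiplies the structure constant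
`(α-1)(j+1) - (β-1)(i+1)` by `ξ`, since it equals `(α+i)(j+1) - (β+j)(i+1)`; with the
extra factor `ξ` in `ρ_ξ` this makes `ρ_ξ` a Lie homomorphism once `ξ² = 1`, and the same
condition makes the index shift, hence `ρ_ξ`, an involution. Finally `ρ_{-1}` is not the
identity since it sends `L_{1,0}` to `-L_{-1,0}`.
-/

theorem LinearMap.map_lie_of_basis {R ι L M : Type*} [CommRing R] [LieRing L] [LieAlgebra R L]
    [LieRing M] [LieAlgebra R M] (b : Module.Basis ι R L) (f : L →ₗ[R] M)
    (h : ∀ i j, f ⁅b i, b j⁆ = ⁅f (b i), f (b j)⁆) (x y : L) : f ⁅x, y⁆ = ⁅f x, f y⁆ := by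
  have hbilin : (LieModule.toEnd R L L : L →ₗ[R] Module.End R L).compr₂ f =
      (LieModule.toEnd R M M : M →ₗ[R] Module.End R M).compl₁₂ f f :=
    LinearMap.ext_basis b b fun i j => by simpa using h i j
  simpa using LinearMap.congr_fun₂ hbilin x y

namespace BlockLieAlgebra

variable {F B : Type*} [Field F] [LieRing B] [LieAlgebra F B] (L : Module.Basis (ℤ × ℕ) F B)
  {ξ : ℤ} {f : B →ₗ[F] B}

theorem comp_self_eq_id (hξ : ξ * ξ = 1)
    (hf : ∀ (α : ℤ) (i : ℕ), f (L (α, i)) = (ξ : F) • L (ξ * (α + i) - i, i)) :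
    f ∘ₗ f = LinearMap.id := by
  refine L.ext fun ⟨α, i⟩ => ?_
  have hξF : (ξ : F) * ξ = 1 := by rw [← Int.cast_mul, hξ, Int.cast_one]
  have hindex : ξ * (ξ * (α + i) - i + i) - i = α := by
    rw [sub_add_cancel, ← mul_assoc, hξ, one_mul, add_sub_cancel_right]
  simp only [LinearMap.comp_apply, LinearMap.id_apply, hf, map_smul, smul_smul, hindex, hξF,
    one_smul]

theorem map_lie
    (hL : ∀ (α β : ℤ) (i j : ℕ),
      ⁅L (α, i), L (β, j)⁆ =
        (((α - 1) * (j + 1) - (β - 1) * (i + 1) : ℤ) : F) • L (α + β, i + j))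
    (hξ : ξ * ξ = 1)
    (hf : ∀ (α : ℤ) (i : ℕ), f (L (α, i)) = (ξ : F) • L (ξ * (α + i) - i, i)) (x y : B) :
    f ⁅x, y⁆ = ⁅f x, f y⁆ := by
  refine f.map_lie_of_basis L (fun ⟨α, i⟩ ⟨β, j⟩ => ?_) x y
  have hindex : ξ * (α + β + ↑(i + j)) - ↑(i + j) =
      (ξ * (α + i) - i) + (ξ * (β + j) - j) := by
    push_cast; ring
  have hcoeff : ((α - 1) * ((j : ℤ) + 1) - (β - 1) * ((i : ℤ) + 1)) * ξ =
      ξ * ξ * ((ξ * (α + i) - i - 1) * ((j : ℤ) + 1) - (ξ * (β + j) - j - 1) * ((i : ℤ) + 1)) := by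
    rw [hξ, one_mul]; ring
  rw [hL, map_smul, hf, hf, hf, smul_lie, lie_smul, hL, smul_smul, smul_smul, smul_smul, hindex]
  simp only [← Int.cast_mul, hcoeff]

theorem ne_id_of_ne_one (hξ : ξ ≠ 1)
    (hf : ∀ (α : ℤ) (i : ℕ), f (L (α, i)) = (ξ : F) • L (ξ * (α + i) - i, i)) :
    f ≠ LinearMap.id := by
  intro hid
  have h := congrArg (fun x => L.repr x (1, 0)) (hf 1 0)
  simp [hid, hξ] at h

end BlockLieAlgebra

theorem rho_xi_automorphisms_general
    {F : Type*} [Field F]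
    {B : Type*} [LieRing B] [LieAlgebra F B]
    (L : Module.Basis (ℤ × ℕ) F B)
    (hL : ∀ (α β : ℤ) (i j : ℕ),
      ⁅L (α, i), L (β, j)⁆ =
        (((α - 1) * (j + 1) - (β - 1) * (i + 1) : ℤ) : F) • L (α + β, i + j))
    (ρ : ℤ → B →ₗ[F] B)
    (hρ : ∀ (ξ : ℤ) (α : ℤ) (i : ℕ),
      ρ ξ (L (α, i)) = (ξ : F) • L (ξ * (α + i) - i, i)) :
    (∀ ξ : ℤ, ξ = 1 ∨ ξ = -1 →
        Function.Bijective (ρ ξ) ∧ ∀ x y : B, ρ ξ ⁅x, y⁆ = ⁅ρ ξ x, ρ ξ y⁆) ∧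
      ρ 1 = LinearMap.id ∧
      (ρ (-1)) ∘ₗ (ρ (-1)) = LinearMap.id ∧
      ρ (-1) ≠ LinearMap.id := by
  have hsq : ∀ ξ : ℤ, ξ = 1 ∨ ξ = -1 → ξ * ξ = 1 := fun ξ hξ =>
    Int.isUnit_mul_self (Int.isUnit_iff.mpr hξ)
  refine ⟨fun ξ hξ => ⟨?_, BlockLieAlgebra.map_lie L hL (hsq ξ hξ) (hρ ξ)⟩, ?_,
    BlockLieAlgebra.comp_self_eq_id L (hsq (-1) (Or.inr rfl)) (hρ (-1)),
    BlockLieAlgebra.ne_id_of_ne_one L (by decide) (hρ (-1))⟩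
  · have hinv : Function.Involutive (ρ ξ) :=
      LinearMap.congr_fun (BlockLieAlgebra.comp_self_eq_id L (hsq ξ hξ) (hρ ξ))
    exact hinv.bijective
  · exact L.ext fun ⟨α, i⟩ => by simp [hρ]

/-- For each `ξ ∈ {1, −1}`, the linear map `ρ_ξ` on the Block type Lie
algebra `B` determined by `ρ_ξ (L (α,i)) = ξ • L (ξ(α+i)−i, i)` is a Lie algebra
automorphism of `B`; moreover `ρ_1 = id`, `ρ_{−1}` is an involution different from the
identity, so `{ρ_ξ : ξ = ±1}` is a subgroup of `Aut(B)` isomorphic to `ℤ/2ℤ`. -/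
theorem rho_xi_automorphisms
    {F : Type*} [Field F] [IsAlgClosed F] [CharZero F]
    {B : Type*} [LieRing B] [LieAlgebra F B]
    (L : Module.Basis (ℤ × ℕ) F B)
    (hL : ∀ (α β : ℤ) (i j : ℕ),
      ⁅L (α, i), L (β, j)⁆ =
        (((α - 1) * (j + 1) - (β - 1) * (i + 1) : ℤ) : F) • L (α + β, i + j))
    (ρ : ℤ → B →ₗ[F] B)
    (hρ : ∀ (ξ : ℤ) (α : ℤ) (i : ℕ),
      ρ ξ (L (α, i)) = (ξ : F) • L (ξ * (α + i) - i, i)) :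
    (∀ ξ : ℤ, ξ = 1 ∨ ξ = -1 →
        Function.Bijective (ρ ξ) ∧ ∀ x y : B, ρ ξ ⁅x, y⁆ = ⁅ρ ξ x, ρ ξ y⁆) ∧
      ρ 1 = LinearMap.id ∧
      (ρ (-1)) ∘ₗ (ρ (-1)) = LinearMap.id ∧
      ρ (-1) ≠ LinearMap.id :=
  rho_xi_automorphisms_general L hL ρ hρ
end

section
/- (Theorem 3.1, explicit form) For every Lie algebra automorphism τ of B there exist μ, ν ∈ F* and ξ ∈ {1, −1} such that τ(L_{α,i}) = ξ·μ^α·ν^i·L_{ξ(α+i)−i, i} for all α ∈ ℤ and i ∈ ℕ. -/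
/-!
In the basis `N (x, i) = L (x - i, i)` the bracket reads
`⁅N p, N q⁆ = bracketCoeff p q • N (p + q)`, and `ad (N 0)` is diagonal with eigenvalue `-x` on
`N (x, i)`, hence locally finite; so is `ad (τ (N 0))`. If `ad v` is locally finite, every index in
the support of `v` is `≤ 0` for any additive monomial order: otherwise iterating `ad v` on a
suitable basis vector produces leading terms that grow forever. Applied to the lexicographic order
and to its mirror image in the first coordinate, this gives `τ (N 0) = c • N 0`, and comparing
eigenvalues of `ad (N 0)` under `τ` and `τ⁻¹` forces `c = ±1`. Composing with the flip
`N (x, i) ↦ -N (-x, i)` we may take `c = 1`. Then `τ` preserves the eigenspaces of `ad (N 0)`, a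
leading-term argument on `⁅τ N (1, 0), τ N (-1, 0)⁆ = 2 • N 0` shows that `τ` rescales
`N (±1, 0)`, so `τ` commutes with `ad N (-1, 0) ∘ ad N (1, 0)`, whose eigenvalues separate the
basis vectors inside each eigenspace. Hence `τ (N p) = χ p • N p` with `χ` multiplicative along
nonzero brackets, which forces `χ (x, i) = μ ^ x * ρ ^ i`.
-/

open Polynomial LieAlgebra

namespace BlockAlgebra

section Diagonal

variable {F M Γ : Type*} [Field F] [AddCommGroup M] [Module F M] (N : Module.Basis Γ F M)

theorem eq_smul_of_support_subset {v : M} {p : Γ} (h : ∀ q ∈ (N.repr v).support, q = p) :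
    v = N.repr v p • N p := by
  have hv : N.repr v = Finsupp.single p (N.repr v p) :=
    Finsupp.eq_single_iff.mpr ⟨fun q hq => Finset.mem_singleton.mpr (h q hq), rfl⟩
  conv_lhs => rw [← N.repr.symm_apply_apply v, hv, N.repr_symm_single]

variable {N} {D : Module.End F M} {d : Γ → F}

theorem repr_apply_of_diagonal (hD : ∀ p, D (N p) = d p • N p) (v : M) (p : Γ) :
    N.repr (D v) p = d p * N.repr v p := by
  classical
  have : N.coord p ∘ₗ D = d p • N.coord p := N.ext fun q => by
    by_cases h : q = p
    · subst h; simp [hD]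
    · simp [hD, Ne.symm h]
  exact LinearMap.congr_fun this v

theorem eq_of_mem_support_of_apply_eq_smul (hD : ∀ p, D (N p) = d p • N p) {v : M} {t : F}
    (hv : D v = t • v) {p : Γ} (hp : p ∈ (N.repr v).support) : d p = t := by
  have h := repr_apply_of_diagonal hD v p
  rw [hv, map_smul, Finsupp.smul_apply, smul_eq_mul] at h
  exact mul_right_cancel₀ (Finsupp.mem_support_iff.mp hp) h.symm

def IsLocallyFinite (D : Module.End F M) : Prop :=
  ∀ v : M, ∃ P : F[X], P.Monic ∧ aeval D P v = 0

theorem isLocallyFinite_of_diagonal (hD : ∀ p, D (N p) = d p • N p) : IsLocallyFinite D := by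
  classical
  intro v
  set P := ∏ q ∈ (N.repr v).support, (X - C (d q))
  refine ⟨P, monic_prod_of_monic _ _ fun q _ => monic_X_sub_C (d q), N.repr.injective ?_⟩
  have hP : ∀ p, aeval D P (N p) = P.eval (d p) • N p := fun p =>
    Module.End.aeval_apply_of_hasEigenvector ⟨Module.End.mem_eigenspace_iff.mpr (hD p), N.ne_zero p⟩
  ext p
  rw [repr_apply_of_diagonal hP, map_zero, Finsupp.zero_apply]
  by_cases hp : p ∈ (N.repr v).support
  · rw [eval_prod, Finset.prod_eq_zero hp (by simp), zero_mul]
  · rw [Finsupp.notMem_support_iff.mp hp, mul_zero]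

end Diagonal

theorem isLocallyFinite_ad_map {F B B' : Type*} [Field F] [LieRing B] [LieAlgebra F B]
    [LieRing B'] [LieAlgebra F B'] (φ : B ≃ₗ⁅F⁆ B') {x : B} (h : IsLocallyFinite (ad F B x)) :
    IsLocallyFinite (ad F B' (φ x)) := by
  intro w
  obtain ⟨P, hP, hPw⟩ := h (φ.symm w)
  refine ⟨P, hP, ?_⟩
  have hconj : ad F B' (φ x) = φ.toLinearEquiv.conjAlgEquiv F (ad F B x) := (conj_ad_apply φ x).symm
  rw [hconj, aeval_algHom_apply]
  change φ (aeval (ad F B x) P (φ.symm w)) = 0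
  rw [hPw, map_zero]

section Graded

variable {F B Γ Λ : Type*} [Field F] [LieRing B] [LieAlgebra F B] [AddCommMonoid Γ]
  [AddCommMonoid Λ] [LinearOrder Λ] [IsOrderedCancelAddMonoid Λ]
  {N : Module.Basis Γ F B} {c : Γ → Γ → F} (hN : ∀ p q, ⁅N p, N q⁆ = c p q • N (p + q))
  {ι : Γ →+ Λ}

theorem eq_of_add_eq_of_le (hι : Function.Injective ι) {p q pa pb : Γ} (hp : ι p ≤ ι pa)
    (hq : ι q ≤ ι pb) (h : p + q = pa + pb) : p = pa ∧ q = pb := by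
  have hsum : ι p + ι q = ι pa + ι pb := by rw [← map_add, ← map_add, h]
  refine ⟨hι (hp.antisymm ?_), hι (hq.antisymm ?_)⟩
  · by_contra! hlt
    exact (add_lt_add_of_lt_of_le hlt hq).ne hsum
  · by_contra! hlt
    exact (add_lt_add_of_le_of_lt hp hlt).ne hsum

include hN

theorem repr_lie (a b : B) :
    N.repr ⁅a, b⁆ = (N.repr a).sum fun p x =>
      (N.repr b).sum fun q y => Finsupp.single (p + q) (x * y * c p q) := by
  conv_lhs => rw [← N.linearCombination_repr a, ← N.linearCombination_repr b]
  simp only [Finsupp.linearCombination_apply, Finsupp.sum, sum_lie, lie_sum, smul_lie, lie_smul,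
    hN, map_sum, map_smul, N.repr_self, Finset.smul_sum, Finsupp.smul_single, smul_eq_mul, mul_one]
  rw [Finset.sum_comm]
  refine Finset.sum_congr rfl fun p _ => Finset.sum_congr rfl fun q _ => ?_
  rw [mul_left_comm, mul_assoc]

theorem le_of_mem_support_lie {a b : B} {pa pb : Γ} (ha : ∀ p ∈ (N.repr a).support, ι p ≤ ι pa)
    (hb : ∀ q ∈ (N.repr b).support, ι q ≤ ι pb) :
    ∀ z ∈ (N.repr ⁅a, b⁆).support, ι z ≤ ι (pa + pb) := by
  classical
  intro z hz
  rw [repr_lie hN] at hz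
  obtain ⟨p, hp, hz⟩ := Finset.mem_biUnion.mp (Finsupp.support_sum hz)
  obtain ⟨q, hq, hz⟩ := Finset.mem_biUnion.mp (Finsupp.support_sum hz)
  rw [Finset.mem_singleton.mp (Finsupp.support_single_subset hz), map_add, map_add]
  exact add_le_add (ha p hp) (hb q hq)

theorem repr_lie_add (hι : Function.Injective ι) {a b : B} {pa pb : Γ}
    (ha : ∀ p ∈ (N.repr a).support, ι p ≤ ι pa) (hb : ∀ q ∈ (N.repr b).support, ι q ≤ ι pb) :
    N.repr ⁅a, b⁆ (pa + pb) = N.repr a pa * N.repr b pb * c pa pb := by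
  classical
  rw [repr_lie hN, Finsupp.sum_apply, Finsupp.sum_eq_single pa, Finsupp.sum_apply,
    Finsupp.sum_eq_single pb]
  · simp
  · intro q hq hne
    rw [Finsupp.single_apply, if_neg fun h => hne (eq_of_add_eq_of_le hι le_rfl
      (hb q (Finsupp.mem_support_iff.mpr hq)) h).2]
  · simp
  · intro p hp hne
    rw [Finsupp.sum_apply]
    refine Finset.sum_eq_zero fun q hq => ?_
    dsimp only
    rw [Finsupp.single_apply, if_neg fun h => hne (eq_of_add_eq_of_le hι
      (ha p (Finsupp.mem_support_iff.mpr hp)) (hb q hq) h).1]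
  · simp

theorem le_of_mem_support_ad_pow {v w : B} {pa pb : Γ} (hv : ∀ p ∈ (N.repr v).support, ι p ≤ ι pa)
    (hw : ∀ q ∈ (N.repr w).support, ι q ≤ ι pb) (k : ℕ) :
    ∀ z ∈ (N.repr ((ad F B v ^ k) w)).support, ι z ≤ ι (pb + k • pa) := by
  induction k with
  | zero => simpa using hw
  | succ k ih =>
    rw [pow_succ', Module.End.mul_apply, ad_apply, succ_nsmul', add_left_comm]
    exact le_of_mem_support_lie hN hv ih

theorem repr_ad_pow_ne_zero (hι : Function.Injective ι) {v w : B} {pa pb : Γ}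
    (hv : ∀ p ∈ (N.repr v).support, ι p ≤ ι pa) (hw : ∀ q ∈ (N.repr w).support, ι q ≤ ι pb)
    (hva : N.repr v pa ≠ 0) (hwb : N.repr w pb ≠ 0) (hc : ∀ k : ℕ, c pa (pb + k • pa) ≠ 0)
    (k : ℕ) : N.repr ((ad F B v ^ k) w) (pb + k • pa) ≠ 0 := by
  induction k with
  | zero => simpa using hwb
  | succ k ih =>
    rw [pow_succ', Module.End.mul_apply, ad_apply, succ_nsmul', add_left_comm,
      repr_lie_add hN hι hv (le_of_mem_support_ad_pow hN hv hw k)]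
    exact mul_ne_zero (mul_ne_zero hva ih) (hc k)

theorem not_isLocallyFinite_ad (hι : Function.Injective ι) {v : B} {pa : Γ}
    (hv : ∀ p ∈ (N.repr v).support, ι p ≤ ι pa) (hva : N.repr v pa ≠ 0) (hpos : 0 < ι pa)
    (pb : Γ) (hc : ∀ k : ℕ, c pa (pb + k • pa) ≠ 0) : ¬ IsLocallyFinite (ad F B v) := by
  intro hfin
  obtain ⟨P, hP, hPw⟩ := hfin (N pb)
  have hw : ∀ q ∈ (N.repr (N pb)).support, ι q ≤ ι pb := fun q hq => by
    rw [N.repr_self] at hq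
    rw [Finset.mem_singleton.mp (Finsupp.support_single_subset hq)]
  set n := P.natDegree
  have hlower : ∀ r < n, N.repr ((ad F B v ^ r) (N pb)) (pb + n • pa) = 0 := by
    intro r hr
    by_contra hne
    have hle := le_of_mem_support_ad_pow hN hv hw r _ (Finsupp.mem_support_iff.mpr hne)
    rw [map_add, map_add, map_nsmul, map_nsmul] at hle
    exact hle.not_gt (by gcongr)
  have hcoeff := congrArg (fun u => N.repr u (pb + n • pa)) hPw
  simp only [aeval_eq_sum_range, LinearMap.sum_apply, LinearMap.smul_apply, map_sum, map_smul,
    Finsupp.coe_finsetSum, Finset.sum_apply, Finsupp.smul_apply, smul_eq_mul, map_zero,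
    Finsupp.coe_zero, Pi.zero_apply] at hcoeff
  rw [Finset.sum_range_succ, Finset.sum_eq_zero fun r hr => by
      rw [hlower r (Finset.mem_range.mp hr), mul_zero],
    zero_add, hP.coeff_natDegree, one_mul] at hcoeff
  exact repr_ad_pow_ne_zero hN hι hv hw hva (by simp) hc n hcoeff

theorem le_zero_of_isLocallyFinite_ad (hι : Function.Injective ι)
    (hc : ∀ a, 0 < ι a → ∃ b, ∀ k : ℕ, c a (b + k • a) ≠ 0) {v : B}
    (hv : IsLocallyFinite (ad F B v)) : ∀ p ∈ (N.repr v).support, ι p ≤ 0 := by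
  by_contra! ⟨p, hp, hpos⟩
  obtain ⟨pa, hpa, hmax⟩ := Finset.exists_max_image _ ι ⟨p, hp⟩
  obtain ⟨b, hb⟩ := hc pa (hpos.trans_le (hmax p hp))
  exact not_isLocallyFinite_ad hN hι hmax (Finsupp.mem_support_iff.mp hpa)
    (hpos.trans_le (hmax p hp)) b hb hv

end Graded

theorem map_lie_of_basis {F B B' Γ : Type*} [Field F] [LieRing B] [LieAlgebra F B] [LieRing B']
    [LieAlgebra F B'] (N : Module.Basis Γ F B) (f : B →ₗ[F] B')
    (h : ∀ p q, f ⁅N p, N q⁆ = ⁅f (N p), f (N q)⁆) (x y : B) : f ⁅x, y⁆ = ⁅f x, f y⁆ := by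
  have : (ad F B : B →ₗ[F] Module.End F B).compr₂ f =
      (ad F B' : B' →ₗ[F] Module.End F B').compl₁₂ f f := LinearMap.ext_basis N N h
  simpa using LinearMap.congr_fun₂ this x y

def bracketCoeff (p q : ℤ × ℕ) : ℤ := p.1 * (q.2 + 1) - q.1 * (p.2 + 1)

theorem bracketCoeff_add_nsmul (p q : ℤ × ℕ) (k : ℕ) :
    bracketCoeff p (q + k • p) = bracketCoeff p q - k * p.1 := by
  obtain ⟨x, i⟩ := p
  obtain ⟨y, j⟩ := q
  simp [bracketCoeff]
  ring

theorem exists_bracketCoeff_add_nsmul_ne_zero (a : ℤ × ℕ) :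
    ∃ b, ∀ k : ℕ, bracketCoeff a (b + k • a) ≠ 0 := by
  rcases le_total 0 a.1 with h | h
  · refine ⟨(a.1 + 1, 0), fun k => ?_⟩
    rw [bracketCoeff_add_nsmul, bracketCoeff]
    push_cast
    nlinarith
  · refine ⟨(a.1 - 1, 0), fun k => ?_⟩
    rw [bracketCoeff_add_nsmul, bracketCoeff]
    push_cast
    nlinarith

def lexOrd : ℤ × ℕ →+ ℤ ×ₗ ℕ where
  toFun := toLex
  map_zero' := rfl
  map_add' _ _ := rfl

@[simps]
def negFst : ℤ × ℕ ≃+ ℤ × ℕ where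
  toFun p := (-p.1, p.2)
  invFun p := (-p.1, p.2)
  left_inv p := by simp
  right_inv p := by simp
  map_add' p q := by simp [add_comm]

theorem lexOrd_injective : Function.Injective lexOrd := toLex.injective

theorem lexOrd_le_zero_iff (p : ℤ × ℕ) : lexOrd p ≤ 0 ↔ p.1 < 0 ∨ p = 0 := by
  rw [show (0 : ℤ ×ₗ ℕ) = toLex 0 from rfl]
  change toLex p ≤ toLex 0 ↔ _
  rw [Prod.Lex.toLex_le_toLex, Prod.ext_iff]
  simp

theorem eq_smul_of_lexOrd_le {F M : Type*} [Field F] [AddCommGroup M] [Module F M]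
    {N : Module.Basis (ℤ × ℕ) F M} {v : M} {x : ℤ} (hfst : ∀ q ∈ (N.repr v).support, q.1 = x)
    (hle : ∀ q ∈ (N.repr v).support, lexOrd q ≤ lexOrd (x, 0)) : v = N.repr v (x, 0) • N (x, 0) :=
  eq_smul_of_support_subset N fun q hq => by
    have h := hle q hq
    change toLex q ≤ toLex (x, 0) at h
    rw [Prod.Lex.toLex_le_toLex, hfst q hq] at h
    exact Prod.ext (hfst q hq) (by simpa using h)

theorem eq_zpow_mul_pow_of_map_add {F : Type*} [Field F] (χ : ℤ × ℕ → F) (h0 : χ 0 = 1)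
    (hadd : ∀ p q, bracketCoeff p q ≠ 0 → χ (p + q) = χ p * χ q) (x : ℤ) (i : ℕ) :
    χ (x, i) = χ (1, 0) ^ x * χ (0, 1) ^ i := by
  have hinv : χ (1, 0) * χ (-1, 0) = 1 := by
    rw [← hadd _ _ (by decide)]
    simpa [Prod.mk_zero_zero] using h0
  have hμ : χ (1, 0) ≠ 0 := left_ne_zero_of_mul_eq_one hinv
  -- the two ways of reaching `(x + 1, i)` from `(x, i)` fail for different `x`
  have hstep (x : ℤ) (i : ℕ) : χ (x + 1, i) = χ (x, i) * χ (1, 0) := by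
    by_cases hx : x = i + 1
    · have h := hadd (x + 1, i) (-1, 0) (by simp [bracketCoeff]; omega)
      simp only [Prod.mk_add_mk, add_neg_cancel_right, add_zero] at h
      linear_combination -χ (1, 0) * h - χ (x + 1, i) * hinv
    · simpa using hadd (x, i) (1, 0) (by simp [bracketCoeff]; omega)
  have hfst (x : ℤ) (i : ℕ) : χ (x, i) = χ (1, 0) ^ x * χ (0, i) := by
    induction x using Int.induction_on with
    | zero => simp
    | succ x ih => rw [hstep, ih, zpow_add_one₀ hμ]; ring
    | pred x ih =>
      have h := hstep (-x - 1) i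
      rw [sub_add_cancel, ih] at h
      rw [zpow_sub_one₀ hμ]
      field_simp
      linear_combination -h
  have hsnd (i : ℕ) : χ (0, i) = χ (0, 1) ^ i := by
    induction i with
    | zero => simpa [Prod.mk_zero_zero] using h0
    | succ i ih =>
      have h := hadd (1, i) (0, 1) (by simp [bracketCoeff])
      simp only [Prod.mk_add_mk, add_zero] at h
      rw [hfst 1 (i + 1), hfst 1 i, ih] at h
      rw [pow_succ]
      exact mul_left_cancel₀ (zpow_ne_zero 1 hμ) (h.trans (by ring))
  rw [hfst, hsnd]

section Block

variable {F B : Type*} [Field F] [LieRing B] [LieAlgebra F B]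
  {N : Module.Basis (ℤ × ℕ) F B} (hN : ∀ p q, ⁅N p, N q⁆ = (bracketCoeff p q : F) • N (p + q))
include hN

theorem lie_basis_zero (p : ℤ × ℕ) : ⁅N 0, N p⁆ = (-p.1 : F) • N p := by
  rw [hN, zero_add]
  simp [bracketCoeff]

theorem isLocallyFinite_ad_basis_zero : IsLocallyFinite (ad F B (N 0)) :=
  isLocallyFinite_of_diagonal (lie_basis_zero hN)

theorem lie_basis_negFst (p q : ℤ × ℕ) :
    ⁅N (negFst p), N (negFst q)⁆ = (-bracketCoeff p q : F) • N (negFst (p + q)) := by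
  rw [hN, ← map_add negFst]
  congr 1
  simp [bracketCoeff]
  ring

theorem map_basis_zero_eq_smul [CharZero F] (φ : B ≃ₗ⁅F⁆ B) :
    φ (N 0) = N.repr (φ (N 0)) 0 • N 0 := by
  have hfin := isLocallyFinite_ad_map φ (isLocallyFinite_ad_basis_zero hN)
  have hc (a : ℤ × ℕ) : ∃ b, ∀ k : ℕ, (bracketCoeff a (b + k • a) : F) ≠ 0 := by
    obtain ⟨b, hb⟩ := exists_bracketCoeff_add_nsmul_ne_zero a
    exact ⟨b, fun k => Int.cast_ne_zero.mpr (hb k)⟩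
  refine eq_smul_of_support_subset N fun p hp => ?_
  -- the support of `φ (N 0)` is `≤ 0` lexicographically, both in `N` and in the basis
  -- `N ∘ negFst`
  have h1 := le_zero_of_isLocallyFinite_ad hN lexOrd_injective (fun a _ => hc a) hfin p hp
  have h2 := le_zero_of_isLocallyFinite_ad (N := N.reindex negFst.toEquiv)
    (c := fun p q => (-bracketCoeff p q : F)) (fun p q => by
      simpa [Module.Basis.reindex_apply] using lie_basis_negFst hN p q) lexOrd_injective
    (fun a _ => by obtain ⟨b, hb⟩ := hc a; exact ⟨b, fun k => neg_ne_zero.mpr (hb k)⟩) hfin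
    (negFst p) (by
      rw [Finsupp.mem_support_iff, Module.Basis.repr_reindex_apply]
      simpa using hp)
  rw [lexOrd_le_zero_iff] at h1 h2
  simp [Prod.ext_iff] at h1 h2 ⊢
  omega

theorem exists_map_basis_zero_eq_inv_intCast_smul [CharZero F] (ψ : B ≃ₗ⁅F⁆ B) :
    ∃ n : ℤ, ψ (N 0) = (n : F)⁻¹ • N 0 := by
  set c := N.repr (ψ (N 0)) 0
  have hc : ψ (N 0) = c • N 0 := map_basis_zero_eq_smul hN ψ
  -- `ψ (N (1, 0))` is an eigenvector of `ad (c • N 0)`, whose eigenvalues are the `-c * x`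
  have hD (p : ℤ × ℕ) : ad F B (ψ (N 0)) (N p) = (c * -p.1) • N p := by
    rw [ad_apply, hc, smul_lie, lie_basis_zero hN, smul_smul]
  have hv : ad F B (ψ (N 0)) (ψ (N (1, 0))) = (-1 : F) • ψ (N (1, 0)) := by
    rw [ad_apply, ← LieEquiv.map_lie, lie_basis_zero hN, map_smul]
    norm_num
  obtain ⟨q, hq⟩ : (N.repr (ψ (N (1, 0)))).support.Nonempty := by
    simpa using N.ne_zero (1, 0)
  have hcq : c * q.1 = 1 := by linear_combination -eq_of_mem_support_of_apply_eq_smul hD hv hq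
  exact ⟨q.1, by rw [hc, eq_inv_of_mul_eq_one_left hcq]⟩

theorem exists_map_basis_zero_eq_sign [CharZero F] (φ : B ≃ₗ⁅F⁆ B) :
    ∃ ξ : ℤ, (ξ = 1 ∨ ξ = -1) ∧ φ (N 0) = (ξ : F) • N 0 := by
  obtain ⟨n, hn⟩ := exists_map_basis_zero_eq_inv_intCast_smul hN φ
  obtain ⟨m, hm⟩ := exists_map_basis_zero_eq_inv_intCast_smul hN φ.symm
  have hnm : n * m = 1 := by
    have h := φ.apply_symm_apply (N 0)
    rw [hm, map_smul, hn, smul_smul] at h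
    have h' := smul_left_injective F (N.ne_zero 0) (h.trans (one_smul F _).symm)
    rw [← mul_inv, inv_eq_one] at h'
    exact_mod_cast (mul_comm (m : F) n ▸ h')
  have hξ := Int.eq_one_or_neg_one_of_mul_eq_one hnm
  refine ⟨n, hξ, hn.trans ?_⟩
  rcases hξ with rfl | rfl <;> norm_num

theorem fst_eq_of_mem_support_map_basis [CharZero F] {φ : B ≃ₗ⁅F⁆ B} (hφ : φ (N 0) = N 0)
    (p : ℤ × ℕ) {q : ℤ × ℕ} (hq : q ∈ (N.repr (φ (N p))).support) : q.1 = p.1 := by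
  have hv : ad F B (N 0) (φ (N p)) = (-p.1 : F) • φ (N p) := by
    rw [ad_apply, ← hφ, ← LieEquiv.map_lie, lie_basis_zero hN, map_smul]
  have h := eq_of_mem_support_of_apply_eq_smul (D := ad F B (N 0)) (lie_basis_zero hN) hv hq
  exact_mod_cast neg_inj.mp h

theorem exists_map_basis_one_and_negOne_eq_smul [CharZero F] {φ : B ≃ₗ⁅F⁆ B} (hφ : φ (N 0) = N 0) :
    ∃ μ μ' : F, φ (N (1, 0)) = μ • N (1, 0) ∧ φ (N (-1, 0)) = μ' • N (-1, 0) ∧ μ * μ' = 1 := by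
  have hfg : ⁅N (1, 0), N (-1, 0)⁆ = (2 : F) • N 0 := by
    rw [hN]
    norm_num [bracketCoeff]
    rfl
  have hbr : ⁅φ (N (1, 0)), φ (N (-1, 0))⁆ = (2 : F) • N 0 := by
    rw [← LieEquiv.map_lie, hfg, map_smul, hφ]
  obtain ⟨pa, hpa, hmaxa⟩ := Finset.exists_max_image _ lexOrd
    (by simpa using N.ne_zero (1, 0) : (N.repr (φ (N (1, 0)))).support.Nonempty)
  obtain ⟨pb, hpb, hmaxb⟩ := Finset.exists_max_image _ lexOrd
    (by simpa using N.ne_zero (-1, 0) : (N.repr (φ (N (-1, 0)))).support.Nonempty)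
  have ha1 := fst_eq_of_mem_support_map_basis hN hφ _ hpa
  have hb1 := fst_eq_of_mem_support_map_basis hN hφ _ hpb
  -- the leading coefficient of the bracket cannot vanish, so `pa + pb` is the index of `N 0`
  have hsum : pa + pb = 0 := by
    by_contra hne
    have h := repr_lie_add hN lexOrd_injective hmaxa hmaxb
    rw [hbr, map_smul, N.repr_self, Finsupp.smul_apply, Finsupp.single_eq_of_ne hne, smul_zero] at h
    refine mul_ne_zero (mul_ne_zero (Finsupp.mem_support_iff.mp hpa)
      (Finsupp.mem_support_iff.mp hpb)) (Int.cast_ne_zero.mpr ?_) h.symm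
    simp only [bracketCoeff, ha1, hb1]
    omega
  have h2 : pa.2 = 0 ∧ pb.2 = 0 := by simpa using congrArg Prod.snd hsum
  have hpa' : pa = (1, 0) := Prod.ext ha1 h2.1
  have hpb' : pb = (-1, 0) := Prod.ext hb1 h2.2
  have ha := eq_smul_of_lexOrd_le (fun q hq => fst_eq_of_mem_support_map_basis hN hφ _ hq)
    (hpa' ▸ hmaxa)
  have hb := eq_smul_of_lexOrd_le (fun q hq => fst_eq_of_mem_support_map_basis hN hφ _ hq)
    (hpb' ▸ hmaxb)
  refine ⟨_, _, ha, hb, ?_⟩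
  rw [ha, hb, smul_lie, lie_smul, hfg, smul_smul, smul_smul] at hbr
  linear_combination smul_left_injective F (N.ne_zero 0) hbr / 2

theorem lie_basis_negOne_lie_basis_one (p : ℤ × ℕ) :
    ⁅N (-1, 0), ⁅N (1, 0), N p⁆⁆ = (((p.1 - p.2 - 1) * (p.1 + p.2 + 2) : ℤ) : F) • N p := by
  rw [hN, lie_smul, hN, smul_smul, ← add_assoc]
  congr 1
  · simp [bracketCoeff]
    ring
  · rw [show ((-1 : ℤ), (0 : ℕ)) + (1, 0) = 0 by decide, zero_add]

theorem map_basis_eq_smul_of_map_basis_zero [CharZero F] {φ : B ≃ₗ⁅F⁆ B} (hφ : φ (N 0) = N 0)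
    (p : ℤ × ℕ) :
    φ (N p) = N.repr (φ (N p)) p • N p := by
  obtain ⟨μ, μ', hμ, hμ', hμμ'⟩ := exists_map_basis_one_and_negOne_eq_smul hN hφ
  -- `φ` commutes with `ad (N (-1, 0)) ∘ ad (N (1, 0))`, whose eigenvalues separate the `N p`
  -- with a common first index
  have hv : (ad F B (N (-1, 0)) ∘ₗ ad F B (N (1, 0))) (φ (N p)) =
      (((p.1 - p.2 - 1) * (p.1 + p.2 + 2) : ℤ) : F) • φ (N p) := by
    have h := congrArg φ (lie_basis_negOne_lie_basis_one hN p)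
    rw [LieEquiv.map_lie, LieEquiv.map_lie, hμ, hμ', smul_lie, smul_lie, lie_smul, smul_smul,
      map_smul, mul_comm, hμμ', one_smul] at h
    exact h
  refine eq_smul_of_support_subset N fun q hq => ?_
  have h1 := fst_eq_of_mem_support_map_basis hN hφ p hq
  have h2 : (q.1 - q.2 - 1) * (q.1 + q.2 + 2) = (p.1 - p.2 - 1) * (p.1 + p.2 + 2) := by
    exact_mod_cast eq_of_mem_support_of_apply_eq_smul (lie_basis_negOne_lie_basis_one hN) hv hq
  rw [h1] at h2
  have h3 : ((q.2 : ℤ) - p.2) * (q.2 + p.2 + 3) = 0 := by linear_combination -h2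
  rcases mul_eq_zero.mp h3 with h | h
  · exact Prod.ext h1 (by omega)
  · omega

theorem exists_map_basis_eq_of_map_basis_zero [CharZero F] {φ : B ≃ₗ⁅F⁆ B}
    (hφ : φ (N 0) = N 0) : ∃ μ ρ : F, μ ≠ 0 ∧ ρ ≠ 0 ∧
      ∀ (x : ℤ) (i : ℕ), φ (N (x, i)) = (μ ^ x * ρ ^ i) • N (x, i) := by
  set χ := fun p => N.repr (φ (N p)) p
  have hχ (p : ℤ × ℕ) : φ (N p) = χ p • N p := map_basis_eq_smul_of_map_basis_zero hN hφ p
  have hχne (p : ℤ × ℕ) : χ p ≠ 0 := fun h => by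
    have := hχ p
    rw [h, zero_smul] at this
    exact N.ne_zero p ((map_eq_zero_iff φ φ.injective).mp this)
  have h0 : χ 0 = 1 :=
    smul_left_injective F (N.ne_zero 0) (((hχ 0).symm.trans hφ).trans (one_smul F _).symm)
  have hadd (p q : ℤ × ℕ) (hpq : bracketCoeff p q ≠ 0) : χ (p + q) = χ p * χ q := by
    have h := φ.map_lie (N p) (N q)
    rw [hN, map_smul, hχ, hχ, hχ, smul_lie, lie_smul, hN, smul_smul, smul_smul, smul_smul] at h
    have := smul_left_injective F (N.ne_zero (p + q)) h
    exact mul_right_cancel₀ (Int.cast_ne_zero.mpr hpq) (by linear_combination this)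
  exact ⟨χ (1, 0), χ (0, 1), hχne _, hχne _, fun x i => by
    rw [hχ, eq_zpow_mul_pow_of_map_add χ h0 hadd]⟩

noncomputable def flipEquiv : B ≃ₗ⁅F⁆ B :=
  { (N.equiv N negFst.toEquiv).trans (LinearEquiv.neg F) with
    map_lie' := fun {x y} => map_lie_of_basis N ((N.equiv N negFst.toEquiv).trans
      (LinearEquiv.neg F)).toLinearMap (fun p q => by
        simp only [LinearEquiv.coe_coe, LinearEquiv.trans_apply, N.equiv_apply, hN p q, map_smul,
          LinearEquiv.neg_apply, neg_lie, lie_neg, neg_neg, smul_neg, ← neg_smul]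
        exact (lie_basis_negFst hN p q).symm) x y }

theorem flipEquiv_apply_basis (p : ℤ × ℕ) : flipEquiv hN (N p) = -N (-p.1, p.2) := by
  change (N.equiv N negFst.toEquiv).trans (LinearEquiv.neg F) (N p) = _
  simp

theorem flipEquiv_flipEquiv (x : B) : flipEquiv hN (flipEquiv hN x) = x := by
  have : (flipEquiv hN).toLinearMap ∘ₗ (flipEquiv hN).toLinearMap = LinearMap.id :=
    N.ext fun p => by simp [flipEquiv_apply_basis]
  exact LinearMap.congr_fun this x

theorem exists_map_basis_eq [CharZero F] (φ : B ≃ₗ⁅F⁆ B) :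
    ∃ (μ ρ : F) (ξ : ℤ), μ ≠ 0 ∧ ρ ≠ 0 ∧ (ξ = 1 ∨ ξ = -1) ∧
      ∀ (x : ℤ) (i : ℕ), φ (N (x, i)) = ((ξ : F) * μ ^ x * ρ ^ i) • N (ξ * x, i) := by
  obtain ⟨ξ, rfl | rfl, hξ⟩ := exists_map_basis_zero_eq_sign hN φ
  · obtain ⟨μ, ρ, hμ, hρ, h⟩ := exists_map_basis_eq_of_map_basis_zero hN (by simpa using hξ)
    exact ⟨μ, ρ, 1, hμ, hρ, Or.inl rfl, fun x i => by simpa using h x i⟩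
  · have hψ : (φ.trans (flipEquiv hN)) (N 0) = N 0 := by
      simp [hξ, flipEquiv_apply_basis]
      rfl
    obtain ⟨μ, ρ, hμ, hρ, h⟩ := exists_map_basis_eq_of_map_basis_zero hN hψ
    refine ⟨μ, ρ, -1, hμ, hρ, Or.inr rfl, fun x i => ?_⟩
    have h' := h x i
    rw [LieEquiv.trans_apply] at h'
    rw [← flipEquiv_flipEquiv hN (φ (N (x, i))), h', map_smul, flipEquiv_apply_basis]
    simp

end Block

@[simps]
def shear : ℤ × ℕ ≃ ℤ × ℕ where
  toFun p := (p.1 + p.2, p.2)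
  invFun p := (p.1 - p.2, p.2)
  left_inv p := by simp
  right_inv p := by simp

theorem lie_reindex_shear {F B : Type*} [Field F] [LieRing B] [LieAlgebra F B]
    {L : Module.Basis (ℤ × ℕ) F B}
    (hL : ∀ (α β : ℤ) (i j : ℕ), ⁅L (α, i), L (β, j)⁆ =
      (((α - 1) * (j + 1) - (β - 1) * (i + 1) : ℤ) : F) • L (α + β, i + j)) (p q : ℤ × ℕ) :
    ⁅L.reindex shear p, L.reindex shear q⁆ = (bracketCoeff p q : F) • L.reindex shear (p + q) := by
  simp only [Module.Basis.reindex_apply, hL]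
  congr 2
  · simp [shear, bracketCoeff]
    ring
  · simp [shear]
    ring

end BlockAlgebra

theorem aut_explicit_form_general
    {F : Type*} [Field F] [CharZero F]
    {B : Type*} [LieRing B] [LieAlgebra F B]
    (L : Module.Basis (ℤ × ℕ) F B)
    (hL : ∀ (α β : ℤ) (i j : ℕ),
      ⁅L (α, i), L (β, j)⁆ =
        (((α - 1) * (j + 1) - (β - 1) * (i + 1) : ℤ) : F) • L (α + β, i + j))
    (τ : B ≃ₗ[F] B) (hτ : ∀ x y : B, τ ⁅x, y⁆ = ⁅τ x, τ y⁆) :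
    ∃ (μ ν : F) (ξ : ℤ), μ ≠ 0 ∧ ν ≠ 0 ∧ (ξ = 1 ∨ ξ = -1) ∧
      ∀ (α : ℤ) (i : ℕ),
        τ (L (α, i)) = ((ξ : F) * μ ^ α * ν ^ i) • L (ξ * (α + i) - i, i) := by
  obtain ⟨μ, ρ, ξ, hμ, hρ, hξ, h⟩ :=
    BlockAlgebra.exists_map_basis_eq (BlockAlgebra.lie_reindex_shear hL)
      { τ with map_lie' := hτ _ _ }
  refine ⟨μ, μ * ρ, ξ, hμ, mul_ne_zero hμ hρ, hξ, fun α i => ?_⟩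
  have h' := h (α + i) i
  simp only [Module.Basis.reindex_apply, BlockAlgebra.shear_symm_apply, add_sub_cancel_right] at h'
  refine h'.trans (congrArg (· • _) ?_)
  rw [zpow_add₀ hμ, zpow_natCast, mul_pow]
  ring

/-- Theorem 3.1, explicit form. For every Lie algebra automorphism `τ`
of the Block type Lie algebra `B` there exist `μ, ν ∈ F*` and `ξ ∈ {1, −1}` such that
`τ (L (α,i)) = ξ • μ^α • ν^i • L (ξ(α+i)−i, i)` for all `α ∈ ℤ` and `i ∈ ℕ`. -/
theorem aut_explicit_form
    {F : Type*} [Field F] [IsAlgClosed F] [CharZero F]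
    {B : Type*} [LieRing B] [LieAlgebra F B]
    (L : Module.Basis (ℤ × ℕ) F B)
    (hL : ∀ (α β : ℤ) (i j : ℕ),
      ⁅L (α, i), L (β, j)⁆ =
        (((α - 1) * (j + 1) - (β - 1) * (i + 1) : ℤ) : F) • L (α + β, i + j))
    (τ : B ≃ₗ[F] B) (hτ : ∀ x y : B, τ ⁅x, y⁆ = ⁅τ x, τ y⁆) :
    ∃ (μ ν : F) (ξ : ℤ), μ ≠ 0 ∧ ν ≠ 0 ∧ (ξ = 1 ∨ ξ = -1) ∧
      ∀ (α : ℤ) (i : ℕ),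
        τ (L (α, i)) = ((ξ : F) * μ ^ α * ν ^ i) • L (ξ * (α + i) - i, i) :=
  aut_explicit_form_general L hL τ hτ
end
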